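/- arXiv:math/0106009 — 7 statements merged into one kernel-verified Lean document; each statement's English description precedes it below -/
import Mathlib

section
/- Let I be a finite set and α ∈ ℕ^I a nonzero vector. There exists λ ∈ ℤ^I which is generic with respect to α if and only if α is indivisible. -/
set_option maxHeartbeats 1000000


/-- `λ ∈ ℤ^I` is generic with respect to `α ∈ ℕ^I` if `λ·α = 0` but `λ·β ≠ 0` for every
`β` with `0 ≤ β ≤ α` componentwise, `β ≠ 0` and `β ≠ α`. -/
def GenericWrt {I : Type*} [Fintype I] (lam : I → ℤ) (α : I → ℕ) : Prop :=
  (∑ i, lam i * (α i : ℤ)) = 0 ∧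
    ∀ β : I → ℕ, (∀ i, β i ≤ α i) → β ≠ 0 → β ≠ α → (∑ i, lam i * (β i : ℤ)) ≠ 0

/-- Balanced digit representations in base `M` are unique: if all digits satisfy
`2 * |d j| < M` and `∑ d j * M ^ j = 0`, then all digits vanish. -/
lemma digits_zero_aux (M : ℤ) : ∀ (n : ℕ) (d : ℕ → ℤ), (∀ j < n, 2 * |d j| < M) →
    (∑ j ∈ Finset.range n, d j * M ^ j) = 0 → ∀ j < n, d j = 0 := by
  intro n
  induction n with
  | zero => simp
  | succ n ih =>
    intro d hb hsum j hj
    have hM : 0 < M := lt_of_le_of_lt (by positivity) (hb 0 (Nat.succ_pos n))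
    rw [Finset.sum_range_succ'] at hsum
    set T := ∑ j ∈ Finset.range n, d (j + 1) * M ^ j with hT
    have e1 : ∑ k ∈ Finset.range n, d (k + 1) * M ^ (k + 1) = M * T := by
      rw [hT, Finset.mul_sum]
      apply Finset.sum_congr rfl; intro k _; ring
    have hsum' : M * T + d 0 = 0 := by rw [← e1]; simpa using hsum
    have hT0 : T = 0 := by
      by_contra h
      have h1 : M ≤ |d 0| := by
        have : d 0 = -(M * T) := by linarith
        rw [this, abs_neg, abs_mul, abs_of_pos hM]
        nlinarith [abs_pos.mpr h, abs_nonneg T]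
      have := hb 0 (Nat.succ_pos n)
      nlinarith [abs_nonneg (d 0)]
    have hd0 : d 0 = 0 := by rw [hT0] at hsum'; linarith
    have hrest := ih (fun j => d (j + 1)) (fun j hj => hb (j + 1) (by omega)) (by rw [← hT0])
    rcases Nat.eq_zero_or_pos j with rfl | hjp
    · exact hd0
    · obtain ⟨k, rfl⟩ := Nat.exists_eq_succ_of_ne_zero (by omega : j ≠ 0)
      simpa using hrest k (by omega)

/-- For a nonzero `α ∈ ℕ^I`, a generic `λ ∈ ℤ^I` with respect to `α` exists if and only if
`α` is indivisible (the gcd of its components is `1`). -/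
theorem exists_generic_iff_indivisible
    {I : Type} [Fintype I] (α : I → ℕ) (hα : α ≠ 0) :
    (∃ lam : I → ℤ, GenericWrt lam α) ↔ Finset.univ.gcd α = 1 := by
  classical
  obtain ⟨i0, hi0⟩ : ∃ i, α i ≠ 0 := by
    by_contra h
    push_neg at h
    exact hα (funext fun i => h i)
  constructor
  · -- easy direction: a generic λ exists → gcd = 1
    rintro ⟨lam, h0, hgen⟩
    set dg := Finset.univ.gcd α with hdg
    have hdvd : ∀ i, dg ∣ α i := fun i => Finset.gcd_dvd (Finset.mem_univ i)
    have hdg0 : dg ≠ 0 := by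
      intro h
      exact hi0 (Nat.eq_zero_of_zero_dvd (h ▸ hdvd i0))
    by_contra hne
    have hdg2 : 2 ≤ dg := by omega
    set β : I → ℕ := fun i => α i / dg with hβ
    have hmul : ∀ i, dg * β i = α i := fun i => Nat.mul_div_cancel' (hdvd i)
    have hβle : ∀ i, β i ≤ α i := fun i => Nat.div_le_self _ _
    have hβ0 : β ≠ 0 := by
      intro h
      apply hi0
      have hb := congrFun h i0
      simp only [Pi.zero_apply] at hb
      have hm := hmul i0
      rw [hb, Nat.mul_zero] at hm
      exact hm.symm
    have hβα : β ≠ α := by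
      intro h
      have h1 := hmul i0
      have h2 := congrFun h i0
      rw [h2] at h1
      nlinarith [Nat.pos_of_ne_zero hi0]
    apply hgen β hβle hβ0 hβα
    have key : (dg : ℤ) * (∑ i, lam i * (β i : ℤ)) = 0 := by
      rw [Finset.mul_sum, ← h0]
      apply Finset.sum_congr rfl
      intro i _
      have := hmul i
      push_cast [← this]
      ring
    have : (dg : ℤ) ≠ 0 := by exact_mod_cast hdg0
    exact (mul_eq_zero.mp key).resolve_left this
  · -- hard direction: gcd = 1 → a generic λ exists
    intro hgcd
    set n := Fintype.card I with hn
    set e : I ≃ Fin n := Fintype.equivFin I with he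
    set S : ℤ := ∑ i, (α i : ℤ) ^ 2 with hS
    set B : ℤ := ∑ i, (α i : ℤ) with hB
    set M : ℤ := 4 * S * B + 1 with hM
    have hS0 : 0 ≤ S := Finset.sum_nonneg fun i _ => by positivity
    have hB0 : 0 ≤ B := Finset.sum_nonneg fun i _ => by positivity
    have hαB : ∀ i, (α i : ℤ) ≤ B := by
      intro i
      rw [hB]
      exact Finset.single_le_sum (f := fun j => (α j : ℤ)) (fun j _ => by positivity)
        (Finset.mem_univ i)
    set T : ℤ := ∑ j, (α j : ℤ) * M ^ (e j : ℕ) with hT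
    set lam : I → ℤ := fun i => S * M ^ (e i : ℕ) - T * α i with hlam
    refine ⟨lam, ?_, ?_⟩
    · have : (∑ i, lam i * (α i : ℤ)) = S * T - T * S := by
        rw [hlam, hS, hT, Finset.mul_sum, Finset.mul_sum, ← Finset.sum_sub_distrib]
        apply Finset.sum_congr rfl; intro i _; ring
      rw [this]; ring
    · intro β hβle hβ0 hβα hzero
      set k : ℤ := ∑ j, (α j : ℤ) * β j with hk
      -- expand λ·β as a digit sum
      have e2 : T * k = ∑ i, (k * α i) * M ^ (e i : ℕ) := by
        rw [hT, Finset.sum_mul]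
        apply Finset.sum_congr rfl; intro i _; ring
      have e3 : (∑ i, lam i * (β i : ℤ)) = (∑ i, (S * β i) * M ^ (e i : ℕ)) - T * k := by
        rw [hk, Finset.mul_sum, ← Finset.sum_sub_distrib]
        apply Finset.sum_congr rfl; intro i _
        simp only [hlam]; ring
      have hexp : (∑ i, lam i * (β i : ℤ)) =
          ∑ i, (S * β i - k * α i) * M ^ (e i : ℕ) := by
        rw [e3, e2, ← Finset.sum_sub_distrib]
        apply Finset.sum_congr rfl; intro i _; ring
      -- digit bounds
      have hk0 : 0 ≤ k := Finset.sum_nonneg fun i _ => by positivity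
      have hkS : k ≤ S := by
        rw [hk, hS]
        apply Finset.sum_le_sum
        intro i _
        have h1 : (β i : ℤ) ≤ α i := by exact_mod_cast hβle i
        have h2 : (0 : ℤ) ≤ α i := by positivity
        nlinarith
      have hbound : ∀ i, 2 * |S * β i - k * α i| < M := by
        intro i
        have h1 : (β i : ℤ) ≤ α i := by exact_mod_cast hβle i
        have h2 : (0 : ℤ) ≤ α i := by positivity
        have h3 : (0 : ℤ) ≤ β i := by positivity
        have h4 : (α i : ℤ) ≤ B := hαB i
        have habs : |S * (β i : ℤ) - k * α i| ≤ S * B := by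
          rw [abs_le]
          constructor <;> nlinarith
        have hSB : 0 ≤ S * B := mul_nonneg hS0 hB0
        rw [hM]
        linarith
      -- reindex to `Fin n`
      set d : ℕ → ℤ := fun j =>
        if h : j < n then S * β (e.symm ⟨j, h⟩) - k * α (e.symm ⟨j, h⟩) else 0 with hd
      have hdsum : (∑ j ∈ Finset.range n, d j * M ^ j) = 0 := by
        rw [← Fin.sum_univ_eq_sum_range (fun j => d j * M ^ j) n]
        have : ∀ j : Fin n, d (j : ℕ) * M ^ (j : ℕ) =
            (S * β (e.symm j) - k * α (e.symm j)) * M ^ (j : ℕ) := by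
          intro j
          rw [hd]
          simp only [j.isLt, dif_pos]
        rw [Finset.sum_congr rfl fun j _ => this j]
        rw [← Equiv.sum_comp e (fun j : Fin n =>
          (S * β (e.symm j) - k * α (e.symm j)) * M ^ (j : ℕ))]
        simp only [Equiv.symm_apply_apply]
        rw [← hexp]
        exact hzero
      have hdbound : ∀ j < n, 2 * |d j| < M := by
        intro j hj
        rw [hd]
        simp only [hj, dif_pos]
        exact hbound _
      have hzero' := digits_zero_aux M n d hdbound hdsum
      have hcomp : ∀ i, S * (β i : ℤ) = k * α i := by
        intro i
        have h1 := hzero' (e i) (e i).isLt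
        rw [hd] at h1
        simp only [(e i).isLt, dif_pos] at h1
        have h2 : (⟨(e i : ℕ), (e i).isLt⟩ : Fin n) = e i := by
          apply Fin.ext; rfl
        rw [h2, Equiv.symm_apply_apply] at h1
        linarith
      -- back to ℕ and the gcd argument
      set sN : ℕ := ∑ j, α j ^ 2 with hsN
      set kN : ℕ := ∑ j, α j * β j with hkN
      have hScast : S = (sN : ℤ) := by rw [hS, hsN]; push_cast; ring
      have hkcast : k = (kN : ℤ) := by rw [hk, hkN]; push_cast; ring
      have hnat : ∀ i, sN * β i = kN * α i := by
        intro i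
        have := hcomp i
        rw [hScast, hkcast] at this
        exact_mod_cast this
      set g : ℕ := Finset.univ.gcd β with hg
      have hgcd1 : Finset.univ.gcd (fun i => sN * β i) = sN * g := by
        rw [Finset.gcd_mul_left, hg]
        simp
      have hgcd2 : Finset.univ.gcd (fun i => kN * α i) = kN := by
        rw [Finset.gcd_mul_left, hgcd]
        simp
      have hfun : (fun i => sN * β i) = fun i => kN * α i := funext hnat
      have hkey : sN * g = kN := by rw [← hgcd1, hfun, hgcd2]
      have hsN0 : sN ≠ 0 := by
        intro h
        apply hi0
        have h1 : α i0 ^ 2 ≤ sN := Finset.single_le_sum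
          (f := fun j => α j ^ 2) (fun j _ => Nat.zero_le _) (Finset.mem_univ i0)
        nlinarith [Nat.pos_of_ne_zero hi0]
      have hβg : ∀ i, β i = g * α i := by
        intro i
        have h1 : sN * β i = sN * (g * α i) := by
          rw [hnat i, ← hkey]; ring
        exact Nat.eq_of_mul_eq_mul_left (Nat.pos_of_ne_zero hsN0) h1
      have hg0 : g ≠ 0 := by
        intro h
        apply hβ0
        funext i
        simp [hβg i, h]
      have hg1 : g = 1 := by
        by_contra h
        have hg2 : 2 ≤ g := by omega
        have := hβle i0
        rw [hβg i0] at this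
        nlinarith [Nat.pos_of_ne_zero hi0]
      apply hβα
      funext i
      simp [hβg i, hg1]
end

section
/- Let Q be a finite quiver without loops with vertex set I, let k be a field of characteristic zero, α ∈ ℕ^I, and let λ ∈ ℤ^I be generic with respect to α. Then every representation of the deformed preprojective algebra Π^λ over k (with parameter the image of λ in k^I) with dimension vector α is simple: it has no subrepresentation other than 0 and the whole representation. -/
open Matrix

/-- Transport of a square matrix along an equality of sizes. -/
def castSqMatrix {k : Type*} {m n : ℕ} (e : m = n)
    (M : Matrix (Fin m) (Fin m) k) : Matrix (Fin n) (Fin n) k :=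
  Matrix.reindex (finCongr e) (finCongr e) M

/-!
Restrict the relation of `Π^λ` at each vertex `i` to the subspace `W i` and take traces. Since
the maps `x_a`, `y_a` preserve `W`, the trace of `x_a y_a` on `W (h a)` equals that of `y_a x_a`
on `W (t a)`, so summing over the vertices the right-hand sides `λ_i · dim W_i` add up to `0`.
In characteristic zero this says `λ · dim W = 0` in `ℤ`, and genericity forces `dim W` to be
`0` or `α`.
-/

section TraceOn

variable {k V V' : Type*} [Field k] [AddCommGroup V] [Module k V] [AddCommGroup V'] [Module k V']

noncomputable def Submodule.retraction (W : Submodule k V) : V →ₗ[k] W :=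
  (W.subtype.exists_leftInverse_of_injective W.ker_subtype).choose

theorem Submodule.retraction_comp_subtype (W : Submodule k V) :
    W.retraction ∘ₗ W.subtype = LinearMap.id :=
  (W.subtype.exists_leftInverse_of_injective W.ker_subtype).choose_spec

theorem Submodule.subtype_comp_retraction_comp_of_forall_mem {U : Type*} [AddCommGroup U]
    [Module k U] (W : Submodule k V) (f : U →ₗ[k] V) (hf : ∀ u, f u ∈ W) :
    W.subtype ∘ₗ W.retraction ∘ₗ f = f := by
  have hfac : f = W.subtype ∘ₗ f.codRestrict W hf := rfl
  rw [hfac, ← LinearMap.comp_assoc (f.codRestrict W hf) W.subtype W.retraction,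
    W.retraction_comp_subtype, LinearMap.id_comp]

/-- For `f` preserving `W` this is the trace of the restriction of `f` to `W`; compressing
instead of restricting makes it defined, and linear, on all endomorphisms. -/
noncomputable def Submodule.traceOn (W : Submodule k V) : Module.End k V →ₗ[k] k where
  toFun f := LinearMap.trace k W (W.retraction ∘ₗ f ∘ₗ W.subtype)
  map_add' f g := by simp only [LinearMap.add_comp, LinearMap.comp_add, map_add]
  map_smul' c f := by simp only [LinearMap.smul_comp, LinearMap.comp_smul, map_smul,
    RingHom.id_apply]

variable [FiniteDimensional k V] [FiniteDimensional k V']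

theorem Submodule.traceOn_id (W : Submodule k V) :
    W.traceOn LinearMap.id = Module.finrank k W := by
  simp [traceOn, W.retraction_comp_subtype, LinearMap.trace_id]

theorem Submodule.traceOn_comp_comm (W : Submodule k V) (W' : Submodule k V')
    (f : V →ₗ[k] V') (g : V' →ₗ[k] V) (hf : ∀ v ∈ W, f v ∈ W') (hg : ∀ v ∈ W', g v ∈ W) :
    W.traceOn (g ∘ₗ f) = W'.traceOn (f ∘ₗ g) := by
  have hf' := W'.subtype_comp_retraction_comp_of_forall_mem (f ∘ₗ W.subtype) fun v => hf v v.2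
  have hg' := W.subtype_comp_retraction_comp_of_forall_mem (g ∘ₗ W'.subtype) fun v => hg v v.2
  calc W.traceOn (g ∘ₗ f)
      = LinearMap.trace k W ((W.retraction ∘ₗ g ∘ₗ W'.subtype) ∘ₗ
          (W'.retraction ∘ₗ f ∘ₗ W.subtype)) := by
        simp only [traceOn, LinearMap.coe_mk, AddHom.coe_mk, LinearMap.comp_assoc, hf']
    _ = LinearMap.trace k W' ((W'.retraction ∘ₗ f ∘ₗ W.subtype) ∘ₗ
          (W.retraction ∘ₗ g ∘ₗ W'.subtype)) := LinearMap.trace_comp_comm' _ _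
    _ = W'.traceOn (f ∘ₗ g) := by
        simp only [traceOn, LinearMap.coe_mk, AddHom.coe_mk, LinearMap.comp_assoc, hg']

end TraceOn

section Quiver

variable {I A k : Type*} [Field k] {α : I → ℕ} {W : ∀ i, Submodule k (Fin (α i) → k)}

theorem traceOn_toLin'_mul_comm {t h : A → I}
    {x : ∀ a : A, Matrix (Fin (α (h a))) (Fin (α (t a))) k}
    {y : ∀ a : A, Matrix (Fin (α (t a))) (Fin (α (h a))) k}
    (hWx : ∀ a : A, ∀ v ∈ W (t a), (x a).mulVec v ∈ W (h a))
    (hWy : ∀ a : A, ∀ v ∈ W (h a), (y a).mulVec v ∈ W (t a)) (a : A) :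
    (W (h a)).traceOn (toLin' (x a * y a)) = (W (t a)).traceOn (toLin' (y a * x a)) := by
  rw [toLin'_mul, toLin'_mul]
  exact Submodule.traceOn_comp_comm _ _ _ _ (hWy a) (hWx a)

variable [DecidableEq I]

theorem traceOn_toLin'_dite_castSqMatrix (j i : I) (M : Matrix (Fin (α j)) (Fin (α j)) k) :
    (W i).traceOn (toLin' (if e : j = i then castSqMatrix (congrArg α e) M else 0)) =
      if j = i then (W j).traceOn (toLin' M) else 0 := by
  split_ifs with e
  · subst e
    simp [castSqMatrix]
  · simp

variable [Fintype I] [Fintype A] (t h : A → I)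
  (x : ∀ a : A, Matrix (Fin (α (h a))) (Fin (α (t a))) k)
  (y : ∀ a : A, Matrix (Fin (α (t a))) (Fin (α (h a))) k)

theorem sum_traceOn_preprojective_relation :
    ∑ i, (W i).traceOn (toLin'
      ((∑ a : A, if e : h a = i then castSqMatrix (congrArg α e) (x a * y a) else 0)
        - (∑ a : A, if e : t a = i then castSqMatrix (congrArg α e) (y a * x a) else 0))) =
      ∑ a, (W (h a)).traceOn (toLin' (x a * y a))
        - ∑ a, (W (t a)).traceOn (toLin' (y a * x a)) := by
  simp only [map_sub, map_sum, traceOn_toLin'_dite_castSqMatrix, Finset.sum_sub_distrib]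
  congr 1 <;> rw [Finset.sum_comm] <;> simp only [Finset.sum_ite_eq, Finset.mem_univ, if_true]

variable {t h x y}

theorem sum_mul_finrank_eq_zero_of_preprojective (lam : I → k)
    (hrel : ∀ i : I,
      (∑ a : A, if e : h a = i then castSqMatrix (congrArg α e) (x a * y a) else 0)
        - (∑ a : A, if e : t a = i then castSqMatrix (congrArg α e) (y a * x a) else 0)
        = lam i • (1 : Matrix (Fin (α i)) (Fin (α i)) k))
    (hWx : ∀ a : A, ∀ v ∈ W (t a), (x a).mulVec v ∈ W (h a))
    (hWy : ∀ a : A, ∀ v ∈ W (h a), (y a).mulVec v ∈ W (t a)) :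
    ∑ i, lam i * Module.finrank k (W i) = 0 := by
  calc ∑ i, lam i * Module.finrank k (W i)
      = ∑ i, (W i).traceOn (toLin' (lam i • (1 : Matrix (Fin (α i)) (Fin (α i)) k))) := by
        simp only [map_smul, toLin'_one, Submodule.traceOn_id, smul_eq_mul]
    _ = ∑ a, (W (h a)).traceOn (toLin' (x a * y a))
          - ∑ a, (W (t a)).traceOn (toLin' (y a * x a)) := by
        simp only [← hrel, sum_traceOn_preprojective_relation]
    _ = 0 := by simp only [traceOn_toLin'_mul_comm hWx hWy, sub_self]

end Quiver

theorem GenericWrt.eq_zero_or_eq {I : Type*} [Fintype I] {lam : I → ℤ} {α : I → ℕ}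
    (hgen : GenericWrt lam α) {β : I → ℕ} (hle : ∀ i, β i ≤ α i)
    (hβ : ∑ i, lam i * (β i : ℤ) = 0) : β = 0 ∨ β = α := by
  by_contra! hne
  exact hgen.2 β hle hne.1 hne.2 hβ

theorem deformed_preprojective_rep_is_simple_of_generic_general
    {I A : Type} [Fintype I] [Fintype A] [DecidableEq I] (t h : A → I)
    (k : Type) [Field k] [CharZero k] (α : I → ℕ) (lam : I → ℤ)
    (hgen : GenericWrt lam α)
    (x : ∀ a : A, Matrix (Fin (α (h a))) (Fin (α (t a))) k)
    (y : ∀ a : A, Matrix (Fin (α (t a))) (Fin (α (h a))) k)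
    (hrel : ∀ i : I,
      (∑ a : A, if e : h a = i then castSqMatrix (congrArg α e) (x a * y a) else 0)
        - (∑ a : A, if e : t a = i then castSqMatrix (congrArg α e) (y a * x a) else 0)
        = ((lam i : k)) • (1 : Matrix (Fin (α i)) (Fin (α i)) k))
    (W : ∀ i : I, Submodule k (Fin (α i) → k))
    (hWx : ∀ a : A, ∀ v ∈ W (t a), (x a).mulVec v ∈ W (h a))
    (hWy : ∀ a : A, ∀ v ∈ W (h a), (y a).mulVec v ∈ W (t a)) :
    (∀ i, W i = ⊥) ∨ (∀ i, W i = ⊤) := by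
  have htrace : ∑ i, lam i * (Module.finrank k (W i) : ℤ) = 0 := by
    exact_mod_cast sum_mul_finrank_eq_zero_of_preprojective (fun i => (lam i : k)) hrel hWx hWy
  have hle : ∀ i, Module.finrank k (W i) ≤ α i := fun i =>
    (Submodule.finrank_le (W i)).trans_eq (Module.finrank_fin_fun k)
  rcases hgen.eq_zero_or_eq hle htrace with hzero | hfull
  · exact Or.inl fun i => Submodule.finrank_eq_zero.mp (congrFun hzero i)
  · exact Or.inr fun i =>
      Submodule.eq_top_of_finrank_eq ((congrFun hfull i).trans (Module.finrank_fin_fun k).symm)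

/-- Over a field of characteristic zero, if `λ ∈ ℤ^I` is generic with respect to `α`, then
every representation of the deformed preprojective algebra `Π^λ` (with parameter the image
of `λ` in `k^I`) with dimension vector `α` is simple: every subrepresentation, i.e. every
family of subspaces `W i ⊆ k^{α i}` stable under all the maps `x_a` and `x_{a*}`,
is either everywhere `0` or everywhere the full space. -/
theorem deformed_preprojective_rep_is_simple_of_generic
    {I A : Type} [Fintype I] [Fintype A] [DecidableEq I] (t h : A → I)
    (hnoloops : ∀ a, t a ≠ h a)
    (k : Type) [Field k] [CharZero k] (α : I → ℕ) (lam : I → ℤ)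
    (hgen : GenericWrt lam α)
    (x : ∀ a : A, Matrix (Fin (α (h a))) (Fin (α (t a))) k)
    (y : ∀ a : A, Matrix (Fin (α (t a))) (Fin (α (h a))) k)
    (hrel : ∀ i : I,
      (∑ a : A, if e : h a = i then castSqMatrix (congrArg α e) (x a * y a) else 0)
        - (∑ a : A, if e : t a = i then castSqMatrix (congrArg α e) (y a * x a) else 0)
        = ((lam i : k)) • (1 : Matrix (Fin (α i)) (Fin (α i)) k))
    (W : ∀ i : I, Submodule k (Fin (α i) → k))
    (hWx : ∀ a : A, ∀ v ∈ W (t a), (x a).mulVec v ∈ W (h a))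
    (hWy : ∀ a : A, ∀ v ∈ W (h a), (y a).mulVec v ∈ W (t a)) :
    (∀ i, W i = ⊥) ∨ (∀ i, W i = ⊤) :=
  deformed_preprojective_rep_is_simple_of_generic_general t h k α lam hgen x y hrel W hWx hWy
end

section
/- Let Q be a finite quiver with vertex set I, k a field, Θ ∈ ℤ^I, and V a nonzero finite-dimensional representation of Q over k. Then there exists a unique filtration by subrepresentations 0 = V_0 ⊊ V_1 ⊊ ⋯ ⊊ V_n = V such that: (i) each subquotient V_j/V_{j−1} is semistable, i.e. for every subrepresentation U of V with V_{j−1} ⊆ U ⊆ V_j and U ≠ V_{j−1} one has s(dim U − dim V_{j−1}) ≤ s(dim V_j − dim V_{j−1}); and (ii) the slopes s(dim V_j − dim V_{j−1}) are strictly decreasing in j. (Harder–Narasimhan filtration.) -/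
/-!
Comparing the slope of a subquotient with `μ` amounts to comparing values of the function
`deg - μ • rk`, which, unlike the slope, is additive under `⊔` and `⊓` of subrepresentations.
Hence the subrepresentations of maximal slope over a fixed one `B` form a sup-closed family, whose
largest member is the maximal destabilizing subrepresentation over `B`. Iterating from `0` gives
the filtration; its slopes strictly decrease since a maximal destabilizing step cannot be followed
by one of at least the same slope. Conversely, in any Harder–Narasimhan filtration every step is
the maximal destabilizing subrepresentation over the previous one, which gives uniqueness. The
argument works in any bounded lattice with a degree and a strictly monotone rank that are both
additive under `⊔` and `⊓`, as dimension vectors of subrepresentations are.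
-/

open Matrix

/-- The slopeVec of a dimension vector `β` with respect to weights `Θ`:
`s(β) = (∑ Θ_i β_i) / (∑ β_i)`. -/
noncomputable def slopeVec {I : Type*} [Fintype I] (Θ : I → ℤ) (β : I → ℕ) : ℚ :=
  (∑ i, (Θ i : ℚ) * (β i : ℚ)) / (∑ i, (β i : ℚ))

/-- A family of subspaces `W i ⊆ k^{α i}` is a subrepresentation of the quiver
representation `x` if it is stable under all the maps `x_a`. -/
def IsSubrep {I A : Type*} (t h : A → I) {k : Type*} [Field k] {α : I → ℕ}
    (x : ∀ a : A, Matrix (Fin (α (h a))) (Fin (α (t a))) k)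
    (W : ∀ i : I, Submodule k (Fin (α i) → k)) : Prop :=
  ∀ a : A, ∀ v ∈ W (t a), (x a).mulVec v ∈ W (h a)

/-- The dimension vector of a family of subspaces. -/
noncomputable def subrepDim {I : Type*} (k : Type*) [Field k] {α : I → ℕ}
    (W : ∀ i : I, Submodule k (Fin (α i) → k)) : I → ℕ :=
  fun i => Module.finrank k (W i)

/-- A representation of dimension vector `α` is `Θ`-slopeVec semistable if `s(dim W) ≤ s(α)`
for every subrepresentation `W` with `W ≠ 0` and `W ≠ V`. -/
noncomputable def SlopeSemistable {I A : Type*} [Fintype I] (t h : A → I) (Θ : I → ℤ)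
    {k : Type*} [Field k] {α : I → ℕ}
    (x : ∀ a : A, Matrix (Fin (α (h a))) (Fin (α (t a))) k) : Prop :=
  ∀ W : ∀ i : I, Submodule k (Fin (α i) → k), IsSubrep t h x W →
    W ≠ (fun _ => ⊥) → W ≠ (fun _ => ⊤) →
    slopeVec Θ (subrepDim k W) ≤ slopeVec Θ α

/-- A representation of dimension vector `α` is `Θ`-slopeVec stable if `s(dim W) < s(α)`
for every subrepresentation `W` with `W ≠ 0` and `W ≠ V`. -/
noncomputable def SlopeStable {I A : Type*} [Fintype I] (t h : A → I) (Θ : I → ℤ)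
    {k : Type*} [Field k] {α : I → ℕ}
    (x : ∀ a : A, Matrix (Fin (α (h a))) (Fin (α (t a))) k) : Prop :=
  ∀ W : ∀ i : I, Submodule k (Fin (α i) → k), IsSubrep t h x W →
    W ≠ (fun _ => ⊥) → W ≠ (fun _ => ⊤) →
    slopeVec Θ (subrepDim k W) < slopeVec Θ α

/-- `F = (n, (V_0, …, V_n))` is a Harder–Narasimhan filtration of the representation `x`:
`0 = V_0 ⊊ V_1 ⊊ ⋯ ⊊ V_n = V`, a chain of subrepresentations such that (i) every subquotient
`V_j/V_{j-1}` is semistable (expressed via subrepresentations `U` with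
`V_{j-1} ⊆ U ⊆ V_j`), and (ii) the slopes of the subquotients are strictly decreasing. -/
noncomputable def IsHNFiltration {I A : Type*} [Fintype I] (t h : A → I) (Θ : I → ℤ)
    {k : Type*} [Field k] {α : I → ℕ}
    (x : ∀ a : A, Matrix (Fin (α (h a))) (Fin (α (t a))) k)
    (F : Σ n : ℕ, Fin (n + 1) → ∀ i : I, Submodule k (Fin (α i) → k)) : Prop :=
  (∀ i, F.2 0 i = ⊥) ∧ (∀ i, F.2 (Fin.last F.1) i = ⊤) ∧
  (∀ j : Fin (F.1 + 1), IsSubrep t h x (F.2 j)) ∧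
  (∀ j : Fin F.1, (∀ i, F.2 j.castSucc i ≤ F.2 j.succ i) ∧ F.2 j.castSucc ≠ F.2 j.succ) ∧
  (∀ j : Fin F.1, ∀ U : ∀ i : I, Submodule k (Fin (α i) → k),
    IsSubrep t h x U →
    (∀ i, F.2 j.castSucc i ≤ U i) → (∀ i, U i ≤ F.2 j.succ i) → U ≠ F.2 j.castSucc →
    slopeVec Θ (fun i => subrepDim k U i - subrepDim k (F.2 j.castSucc) i)
      ≤ slopeVec Θ (fun i => subrepDim k (F.2 j.succ) i - subrepDim k (F.2 j.castSucc) i)) ∧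
  (∀ j j' : Fin F.1, j < j' →
    slopeVec Θ (fun i => subrepDim k (F.2 j'.succ) i - subrepDim k (F.2 j'.castSucc) i)
      < slopeVec Θ (fun i => subrepDim k (F.2 j.succ) i - subrepDim k (F.2 j.castSucc) i))

theorem SupClosed.exists_isGreatest {L : Type*} [SemilatticeSup L] [WellFoundedGT L]
    {M : Set L} (hM : SupClosed M) (hne : M.Nonempty) : ∃ d, IsGreatest M d := by
  obtain ⟨d, hdM, hmax⟩ := wellFounded_gt.has_min M hne
  refine ⟨d, hdM, fun u hu => ?_⟩
  have hd : d = u ⊔ d := (le_sup_right.lt_or_eq).resolve_left (hmax _ (hM hu hdM))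
  exact hd ▸ le_sup_left

structure SlopeData (L : Type*) [Lattice L] where
  deg : L → ℚ
  rk : L → ℕ
  deg_sup_add_deg_inf (a b : L) : deg (a ⊔ b) + deg (a ⊓ b) = deg a + deg b
  rk_sup_add_rk_inf (a b : L) : rk (a ⊔ b) + rk (a ⊓ b) = rk a + rk b
  rk_strictMono : StrictMono rk
  finite_range_deg : (Set.range deg).Finite

namespace SlopeData

section Lattice

variable {L : Type*} [Lattice L] (S : SlopeData L)

def slope (b u : L) : ℚ := (S.deg u - S.deg b) / (S.rk u - S.rk b)

def twist (μ : ℚ) (u : L) : ℚ := S.deg u - μ * S.rk u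

structure IsMaxDestabilizing (b d : L) : Prop where
  lt : b < d
  slope_le (u : L) : b < u → S.slope b u ≤ S.slope b d
  le_of_slope_le (u : L) : b < u → S.slope b d ≤ S.slope b u → u ≤ d

variable {S}

theorem twist_sup_add_twist_inf (μ : ℚ) (a b : L) :
    S.twist μ (a ⊔ b) + S.twist μ (a ⊓ b) = S.twist μ a + S.twist μ b := by
  have hrk : (S.rk (a ⊔ b) : ℚ) + S.rk (a ⊓ b) = S.rk a + S.rk b := by
    exact_mod_cast S.rk_sup_add_rk_inf a b
  simp only [twist]
  linear_combination S.deg_sup_add_deg_inf a b - μ * hrk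

theorem rk_sub_rk_pos {b u : L} (h : b < u) : (0 : ℚ) < S.rk u - S.rk b :=
  sub_pos.2 (by exact_mod_cast S.rk_strictMono h)

theorem slope_le_iff {b u : L} (h : b < u) {μ : ℚ} :
    S.slope b u ≤ μ ↔ S.twist μ u ≤ S.twist μ b := by
  rw [slope, div_le_iff₀ (rk_sub_rk_pos h), twist, twist]
  constructor <;> intro <;> linarith

theorem le_slope_iff {b u : L} (h : b < u) {μ : ℚ} :
    μ ≤ S.slope b u ↔ S.twist μ b ≤ S.twist μ u := by
  rw [slope, le_div_iff₀ (rk_sub_rk_pos h), twist, twist]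
  constructor <;> intro <;> linarith

theorem slope_lt_iff {b u : L} (h : b < u) {μ : ℚ} :
    S.slope b u < μ ↔ S.twist μ u < S.twist μ b := by
  rw [slope, div_lt_iff₀ (rk_sub_rk_pos h), twist, twist]
  constructor <;> intro <;> linarith

theorem IsMaxDestabilizing.unique {b d d' : L} (hd : S.IsMaxDestabilizing b d)
    (hd' : S.IsMaxDestabilizing b d') : d = d' :=
  le_antisymm (hd'.le_of_slope_le d hd.lt (hd.slope_le d' hd'.lt))
    (hd.le_of_slope_le d' hd'.lt (hd'.slope_le d hd.lt))

theorem IsMaxDestabilizing.slope_lt {b d e : L} (hd : S.IsMaxDestabilizing b d)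
    (he : S.IsMaxDestabilizing d e) : S.slope d e < S.slope b d := by
  by_contra! hle
  have hbd : S.twist (S.slope b d) b ≤ S.twist (S.slope b d) d := (le_slope_iff hd.lt).1 le_rfl
  have hde : S.twist (S.slope b d) d ≤ S.twist (S.slope b d) e := (le_slope_iff he.lt).1 hle
  have hbe : S.slope b d ≤ S.slope b e := (le_slope_iff (hd.lt.trans he.lt)).2 (hbd.trans hde)
  exact he.lt.not_ge (hd.le_of_slope_le e (hd.lt.trans he.lt) hbe)

end Lattice

section OrderTop

variable {L : Type*} [Lattice L] [OrderTop L] (S : SlopeData L)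

theorem rk_le_rk_top (u : L) : S.rk u ≤ S.rk ⊤ := S.rk_strictMono.monotone le_top

theorem wellFoundedGT (S : SlopeData L) : WellFoundedGT L :=
  StrictMono.wellFoundedGT (f := fun u => (⟨S.rk u, Nat.lt_succ_of_le (S.rk_le_rk_top u)⟩ :
    Fin (S.rk ⊤ + 1))) fun _ _ h => S.rk_strictMono h

theorem finite_slope_image_Ioi (b : L) : (S.slope b '' Set.Ioi b).Finite := by
  refine ((S.finite_range_deg.prod (Set.finite_Iic (S.rk ⊤))).image
    fun p : ℚ × ℕ => (p.1 - S.deg b) / (p.2 - S.rk b)).subset ?_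
  rintro _ ⟨u, -, rfl⟩
  exact ⟨(S.deg u, S.rk u), ⟨⟨u, rfl⟩, S.rk_le_rk_top u⟩, rfl⟩

theorem exists_isMaxDestabilizing {b : L} (hb : b < ⊤) : ∃ d, S.IsMaxDestabilizing b d := by
  have := S.wellFoundedGT
  obtain ⟨_, ⟨u₀, hu₀, rfl⟩, hmax⟩ :=
    Set.exists_max_image _ id (S.finite_slope_image_Ioi b) ⟨_, ⊤, hb, rfl⟩
  replace hmax (u : L) (hu : b < u) : S.slope b u ≤ S.slope b u₀ := hmax _ ⟨u, hu, rfl⟩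
  set μ := S.slope b u₀
  have htwist : ∀ u, b ≤ u → S.twist μ u ≤ S.twist μ b := fun u hu =>
    hu.eq_or_lt.elim (fun h => h ▸ le_rfl) fun h => (slope_le_iff h).1 (hmax u h)
  set M := {u | b ≤ u ∧ S.twist μ u = S.twist μ b}
  have hM : SupClosed M := by
    rintro u ⟨hbu, hu⟩ v ⟨hbv, hv⟩
    refine ⟨le_sup_of_le_left hbu, le_antisymm (htwist _ (le_sup_of_le_left hbu)) ?_⟩
    linarith [twist_sup_add_twist_inf (S := S) μ u v, htwist _ (le_inf hbu hbv)]
  obtain ⟨d, ⟨-, hd⟩, hdM⟩ := hM.exists_isGreatest ⟨b, le_rfl, rfl⟩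
  have hbd : b < d :=
    hu₀.trans_le <| hdM ⟨hu₀.le, le_antisymm (htwist _ hu₀.le) ((le_slope_iff hu₀).1 le_rfl)⟩
  have hslope : S.slope b d = μ :=
    le_antisymm ((slope_le_iff hbd).2 hd.le) ((le_slope_iff hbd).2 hd.ge)
  refine ⟨d, hbd, fun u hu => hslope ▸ hmax u hu, fun u hu hle => hdM ⟨hu.le, ?_⟩⟩
  exact le_antisymm (htwist u hu.le) ((le_slope_iff hu).1 (hslope ▸ hle))

end OrderTop

section BoundedOrder

variable {L : Type*} [Lattice L] [BoundedOrder L] (S : SlopeData L)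

structure IsHarderNarasimhan {n : ℕ} (f : Fin (n + 1) → L) : Prop where
  apply_zero : f 0 = ⊥
  apply_last : f (Fin.last n) = ⊤
  strictMono : StrictMono f
  semistable (j : Fin n) (u : L) : f j.castSucc < u → u ≤ f j.succ →
    S.slope (f j.castSucc) u ≤ S.slope (f j.castSucc) (f j.succ)
  strictAnti_slope : StrictAnti fun j : Fin n => S.slope (f j.castSucc) (f j.succ)

variable {S}

namespace IsHarderNarasimhan

variable {n : ℕ} {f : Fin (n + 1) → L}

theorem twist_le_of_le_succ (hf : S.IsHarderNarasimhan f) (j : Fin n) {u : L}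
    (hbu : f j.castSucc ≤ u) (hud : u ≤ f j.succ) :
    S.twist (S.slope (f j.castSucc) (f j.succ)) u
      ≤ S.twist (S.slope (f j.castSucc) (f j.succ)) (f j.castSucc) :=
  hbu.eq_or_lt.elim (fun h => h ▸ le_rfl) fun h => (slope_le_iff h).1 (hf.semistable j u h hud)

theorem twist_lt_of_not_le_succ (hf : S.IsHarderNarasimhan f) (j : Fin n) (m : Fin (n + 1))
    {u : L} (hbu : f j.castSucc ≤ u) (hum : u ≤ f m) (hud : ¬u ≤ f j.succ) :
    S.twist (S.slope (f j.castSucc) (f j.succ)) u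
      < S.twist (S.slope (f j.castSucc) (f j.succ)) (f j.castSucc) := by
  set μ := S.slope (f j.castSucc) (f j.succ)
  induction m using Fin.induction generalizing u with
  | zero => exact absurd (hum.trans (hf.strictMono.monotone (Fin.zero_le _))) hud
  | succ m ih =>
    -- `u ⊓ f m` is handled by `ih`, and `(u ⊔ f m) / f m` lies in a later subquotient,
    -- whose slope is `< μ`
    have hjm : j < m := by
      by_contra! hmj
      exact hud (hum.trans (hf.strictMono.monotone (Fin.succ_le_succ_iff.2 hmj)))
    set c := f m.castSucc
    have hbc : f j.castSucc ≤ c := hf.strictMono.monotone (Fin.castSucc_le_castSucc_iff.2 hjm.le)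
    have hinf : S.twist μ (u ⊓ c) ≤ S.twist μ (f j.castSucc) := by
      by_cases hCd : u ⊓ c ≤ f j.succ
      · exact hf.twist_le_of_le_succ j (le_inf hbu hbc) hCd
      · exact (ih (le_inf hbu hbc) inf_le_right hCd).le
    rcases (le_sup_right : c ≤ u ⊔ c).lt_or_eq with hlt | heq
    · have hsup : S.twist μ (u ⊔ c) < S.twist μ c := by
        refine (slope_lt_iff hlt).1 ((hf.semistable m (u ⊔ c) hlt ?_).trans_lt
          (hf.strictAnti_slope hjm))
        exact sup_le hum (hf.strictMono.monotone (Fin.castSucc_le_succ m))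
      linarith [twist_sup_add_twist_inf (S := S) μ u c]
    · exact ih hbu (heq ▸ le_sup_left) hud

theorem isMaxDestabilizing (hf : S.IsHarderNarasimhan f) (j : Fin n) :
    S.IsMaxDestabilizing (f j.castSucc) (f j.succ) := by
  have hle_last : ∀ u, u ≤ f (Fin.last n) := fun u => hf.apply_last ▸ le_top
  refine ⟨hf.strictMono Fin.castSucc_lt_succ, fun u hu => ?_, fun u hu hle => ?_⟩
  · rw [slope_le_iff hu]
    by_cases hud : u ≤ f j.succ
    · exact hf.twist_le_of_le_succ j hu.le hud
    · exact (hf.twist_lt_of_not_le_succ j _ hu.le (hle_last u) hud).le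
  · by_contra hud
    exact ((le_slope_iff hu).1 hle).not_gt (hf.twist_lt_of_not_le_succ j _ hu.le (hle_last u) hud)

theorem apply_eq (hf : S.IsHarderNarasimhan f) {m : ℕ} {g : Fin (m + 1) → L}
    (hg : S.IsHarderNarasimhan g) (j : ℕ) (hn : j ≤ n) (hm : j ≤ m) :
    f ⟨j, by omega⟩ = g ⟨j, by omega⟩ := by
  induction j with
  | zero => exact hf.apply_zero.trans hg.apply_zero.symm
  | succ j ih =>
    exact (hf.isMaxDestabilizing ⟨j, hn⟩).unique
      (ih (by omega) (by omega) ▸ hg.isMaxDestabilizing ⟨j, hm⟩)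

theorem length_le (hf : S.IsHarderNarasimhan f) {m : ℕ} {g : Fin (m + 1) → L}
    (hg : S.IsHarderNarasimhan g) : n ≤ m := by
  by_contra! hmn
  have hlt : f ⟨m, by omega⟩ < f ⟨m + 1, by omega⟩ :=
    hf.strictMono (Fin.mk_lt_mk.2 m.lt_succ_self)
  rw [hf.apply_eq hg m hmn.le le_rfl] at hlt
  exact not_top_lt (hg.apply_last ▸ hlt)

theorem unique (hf : S.IsHarderNarasimhan f) {m : ℕ} {g : Fin (m + 1) → L}
    (hg : S.IsHarderNarasimhan g) :
    (⟨n, f⟩ : Σ n, Fin (n + 1) → L) = ⟨m, g⟩ := by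
  obtain rfl := le_antisymm (hf.length_le hg) (hg.length_le hf)
  exact congrArg _ (funext fun j => hf.apply_eq hg j j.is_le j.is_le)

end IsHarderNarasimhan

variable (S)

open Classical in
noncomputable def maxDestabilizing (b : L) : L :=
  if h : b < ⊤ then (S.exists_isMaxDestabilizing h).choose else ⊤

theorem isMaxDestabilizing_maxDestabilizing {b : L} (h : b < ⊤) :
    S.IsMaxDestabilizing b (S.maxDestabilizing b) := by
  rw [maxDestabilizing, dif_pos h]
  exact (S.exists_isMaxDestabilizing h).choose_spec

noncomputable def hnSeq (S : SlopeData L) : ℕ → L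
  | 0 => ⊥
  | m + 1 => S.maxDestabilizing (S.hnSeq m)

theorem exists_hnSeq_eq_top (S : SlopeData L) : ∃ N, S.hnSeq N = ⊤ := by
  have := S.wellFoundedGT
  obtain ⟨N, hN⟩ := WellFounded.not_rel_apply_succ (r := (· > ·)) S.hnSeq
  refine ⟨N, by_contra fun h => hN ?_⟩
  exact (S.isMaxDestabilizing_maxDestabilizing (lt_top_iff_ne_top.2 h)).lt

theorem exists_isHarderNarasimhan :
    ∃ (n : ℕ) (f : Fin (n + 1) → L), S.IsHarderNarasimhan f := by
  classical
  obtain ⟨N, hN, hmin⟩ : ∃ N, S.hnSeq N = ⊤ ∧ ∀ j < N, S.hnSeq j ≠ ⊤ :=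
    ⟨_, Nat.find_spec S.exists_hnSeq_eq_top, fun _ => Nat.find_min _⟩
  have hmd (j : ℕ) (hj : j < N) : S.IsMaxDestabilizing (S.hnSeq j) (S.hnSeq (j + 1)) :=
    S.isMaxDestabilizing_maxDestabilizing (lt_top_iff_ne_top.2 (hmin j hj))
  have hanti : StrictAntiOn (fun j => S.slope (S.hnSeq j) (S.hnSeq (j + 1))) (Set.Iic (N - 1)) :=
    strictAntiOn_Iic_of_succ_lt fun m hm => (hmd m (by omega)).slope_lt (hmd (m + 1) (by omega))
  refine ⟨N, fun j => S.hnSeq j, ⟨rfl, hN, ?_, ?_, ?_⟩⟩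
  · exact Fin.strictMono_iff_lt_succ.2 fun j => (hmd j j.is_lt).lt
  · exact fun j u hu _ => (hmd j j.is_lt).slope_le u hu
  · intro j j' hjj'
    have hj : (j : ℕ) ≤ N - 1 := by omega
    have hj' : (j' : ℕ) ≤ N - 1 := by omega
    exact hanti hj hj' hjj'

end BoundedOrder

noncomputable def ofFinrank {I : Type*} [Fintype I] (k : Type*) [Field k] {V : I → Type*}
    [∀ i, AddCommGroup (V i)] [∀ i, Module k (V i)] [∀ i, FiniteDimensional k (V i)]
    (Θ : I → ℤ) : SlopeData (∀ i, Submodule k (V i)) where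
  deg W := ∑ i, (Θ i : ℚ) * Module.finrank k (W i)
  rk W := ∑ i, Module.finrank k (W i)
  deg_sup_add_deg_inf W W' := by
    rw [← Finset.sum_add_distrib, ← Finset.sum_add_distrib]
    refine Finset.sum_congr rfl fun i _ => ?_
    rw [← mul_add, ← mul_add]
    exact_mod_cast congrArg (fun n : ℕ => (Θ i : ℚ) * n)
      (Submodule.finrank_sup_add_finrank_inf_eq (W i) (W' i))
  rk_sup_add_rk_inf W W' := by
    rw [← Finset.sum_add_distrib, ← Finset.sum_add_distrib]
    exact Finset.sum_congr rfl fun i _ => Submodule.finrank_sup_add_finrank_inf_eq (W i) (W' i)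
  rk_strictMono W W' h := by
    obtain ⟨hle, i, hi⟩ := Pi.lt_def.1 h
    exact Finset.sum_lt_sum (fun j _ => Submodule.finrank_mono (hle j))
      ⟨i, Finset.mem_univ _, Submodule.finrank_lt_finrank_of_lt hi⟩
  finite_range_deg := by
    refine ((Set.Finite.pi fun i => Set.finite_Iic (Module.finrank k (V i))).image
      fun β : ∀ i, ℕ => ∑ i, (Θ i : ℚ) * β i).subset ?_
    rintro _ ⟨W, rfl⟩
    exact ⟨fun i => Module.finrank k (W i), fun i _ => Submodule.finrank_le (W i), rfl⟩

def comap {L L' : Type*} [Lattice L] [Lattice L'] (S : SlopeData L)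
    (φ : LatticeHom L' L) (hφ : Function.Injective φ) : SlopeData L' where
  deg := S.deg ∘ φ
  rk := S.rk ∘ φ
  deg_sup_add_deg_inf a b := by
    simpa only [Function.comp_apply, map_sup, map_inf] using S.deg_sup_add_deg_inf (φ a) (φ b)
  rk_sup_add_rk_inf a b := by
    simpa only [Function.comp_apply, map_sup, map_inf] using S.rk_sup_add_rk_inf (φ a) (φ b)
  rk_strictMono := S.rk_strictMono.comp ((OrderHomClass.mono φ).strictMono_of_injective hφ)
  finite_range_deg := S.finite_range_deg.subset (Set.range_comp_subset_range _ _)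

end SlopeData

section Quiver

variable {I A : Type*} (t h : A → I) {k : Type*} [Field k] {α : I → ℕ}
  (x : ∀ a : A, Matrix (Fin (α (h a))) (Fin (α (t a))) k)

def subrepSublattice : Sublattice (∀ i, Submodule k (Fin (α i) → k)) where
  carrier := {W | IsSubrep t h x W}
  supClosed' W hW W' hW' a v hv := by
    obtain ⟨y, hy, z, hz, rfl⟩ := Submodule.mem_sup.1 hv
    rw [Matrix.mulVec_add]
    exact Submodule.add_mem_sup (hW a y hy) (hW' a z hz)
  infClosed' W hW W' hW' a v hv := ⟨hW a v hv.1, hW' a v hv.2⟩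

instance : BoundedOrder (subrepSublattice t h x) :=
  Subtype.boundedOrder
    (fun a v hv => by rw [(Submodule.mem_bot k).1 hv, Matrix.mulVec_zero]; exact zero_mem _)
    (fun _ _ _ => trivial)

variable [Fintype I] (Θ : I → ℤ)

noncomputable def subrepSlopeData : SlopeData (subrepSublattice t h x) :=
  (SlopeData.ofFinrank k Θ).comap _ (subrepSublattice t h x).subtype_injective

variable {t h x}

theorem slopeVec_eq_slope {B U : subrepSublattice t h x} (hBU : B ≤ U) :
    slopeVec Θ (fun i => subrepDim k (U : ∀ i, Submodule k (Fin (α i) → k)) i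
      - subrepDim k (B : ∀ i, Submodule k (Fin (α i) → k)) i)
      = (subrepSlopeData t h x Θ).slope B U := by
  have hle (i : I) : subrepDim k B.1 i ≤ subrepDim k U.1 i := Submodule.finrank_mono (hBU i)
  simp only [slopeVec, SlopeData.slope, subrepSlopeData, SlopeData.comap, SlopeData.ofFinrank,
    Function.comp_apply, Nat.cast_sub (hle _), Nat.cast_sum, mul_sub, Finset.sum_sub_distrib]
  rfl

variable {Θ}

theorem isHNFiltration_iff {n : ℕ} (f : Fin (n + 1) → subrepSublattice t h x) :
    IsHNFiltration t h Θ x ⟨n, fun j => f j⟩ ↔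
      (subrepSlopeData t h x Θ).IsHarderNarasimhan f := by
  have hslope (hmono : StrictMono f) (j : Fin n) := slopeVec_eq_slope Θ
    (hmono (Fin.castSucc_lt_succ (i := j))).le
  constructor
  · rintro ⟨h0, hlast, -, hstep, hsemi, hanti⟩
    have hmono : StrictMono f := Fin.strictMono_iff_lt_succ.2 fun j =>
      lt_of_le_of_ne (hstep j).1 fun e => (hstep j).2 (congrArg Subtype.val e)
    refine ⟨Subtype.ext (funext h0), Subtype.ext (funext hlast), hmono, fun j u hlt hle => ?_,
      fun j j' hjj' => ?_⟩
    · rw [← slopeVec_eq_slope Θ hlt.le, ← hslope hmono]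
      exact hsemi j u u.2 hlt.le hle fun e => hlt.ne' (Subtype.ext e)
    · simpa only [← hslope hmono] using hanti j j' hjj'
  · intro hf
    refine ⟨fun i => congrFun (congrArg Subtype.val hf.apply_zero) i,
      fun i => congrFun (congrArg Subtype.val hf.apply_last) i, fun j => (f j).2,
      fun j => ⟨(hf.strictMono Fin.castSucc_lt_succ).le,
        fun e => (hf.strictMono Fin.castSucc_lt_succ).ne (Subtype.ext e)⟩,
      fun j U hU h1 h2 hne => ?_, fun j j' hjj' => ?_⟩
    · have hlt : f j.castSucc < ⟨U, hU⟩ :=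
        lt_of_le_of_ne h1 fun e => hne (congrArg Subtype.val e).symm
      rw [slopeVec_eq_slope (U := ⟨U, hU⟩) Θ h1, hslope hf.strictMono]
      exact hf.semistable j _ hlt h2
    · simpa only [hslope hf.strictMono] using hf.strictAnti_slope hjj'

end Quiver

theorem existsUnique_HN_filtration_general
    {I A : Type} [Fintype I] (t h : A → I) (Θ : I → ℤ)
    (k : Type) [Field k] (α : I → ℕ)
    (x : ∀ a : A, Matrix (Fin (α (h a))) (Fin (α (t a))) k) :
    ∃! F : Σ n : ℕ, Fin (n + 1) → ∀ i : I, Submodule k (Fin (α i) → k),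
      IsHNFiltration t h Θ x F := by
  obtain ⟨n, f, hf⟩ := (subrepSlopeData t h x Θ).exists_isHarderNarasimhan
  refine ⟨⟨n, fun j => f j⟩, (isHNFiltration_iff f).2 hf, ?_⟩
  rintro ⟨m, G⟩ hG
  let g : Fin (m + 1) → subrepSublattice t h x := fun j => ⟨G j, hG.2.2.1 j⟩
  have hg : (subrepSlopeData t h x Θ).IsHarderNarasimhan g := (isHNFiltration_iff g).1 hG
  exact congrArg (fun F => (⟨F.1, fun j => (F.2 j).1⟩ : Σ n, Fin (n + 1) → _)) (hg.unique hf)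

/-- Existence and uniqueness of the Harder–Narasimhan filtration for a nonzero
finite-dimensional representation of a finite quiver. -/
theorem existsUnique_HN_filtration
    {I A : Type} [Fintype I] (t h : A → I) (Θ : I → ℤ)
    (k : Type) [Field k] (α : I → ℕ) (hα : α ≠ 0)
    (x : ∀ a : A, Matrix (Fin (α (h a))) (Fin (α (t a))) k) :
    ∃! F : Σ n : ℕ, Fin (n + 1) → ∀ i : I, Submodule k (Fin (α i) → k),
      IsHNFiltration t h Θ x F :=
  existsUnique_HN_filtration_general t h Θ k α x
end

section
/- Let I be a finite set, Θ ∈ ℤ^I, and for nonzero β ∈ ℕ^I write s(β) = (Σ_i Θ_i β_i)/(Σ_i β_i) ∈ ℚ. Let r be any function from the nonzero vectors of ℕ^I to ℕ. For nonzero α ∈ ℕ^I define n_α := Σ_u Π_β C(r(β) + u(β) − 1, u(β)), the sum being over all finitely supported functions u from the nonzero vectors of ℕ^I to ℕ with Σ_β u(β)·β = α, the product over all β in the support of u, and C denoting the binomial coefficient; and define m_α by the same sum restricted to those u whose support is contained in {β : s(β) = s(α)}. Then for every nonzero α ∈ ℕ^I: n_α = Σ_D Π_{γ∈D} m_γ,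 the sum being over all finite sets D of nonzero vectors of ℕ^I whose elements have pairwise distinct slopes and satisfy Σ_{γ∈D} γ = α. (This is the PBW-theorem identity expressing n_α through the slope-homogeneous quantities m_α.) -/
open Finset

/-- `n_α = ∑_u ∏_β C(r(β) + u(β) − 1, u(β))`, the sum over all finitely supported
functions `u` from the nonzero vectors of `ℕ^I` to `ℕ` with `∑_β u(β)·β = α`. -/
noncomputable def nQty {I : Type*} [Fintype I] (r : (I → ℕ) → ℕ) (α : I → ℕ) : ℕ :=
  ∑ᶠ u ∈ {u : (I → ℕ) →₀ ℕ |
      u 0 = 0 ∧ (u.sum fun β n => n • β) = α},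
    ∏ β ∈ u.support, Nat.choose (r β + u β - 1) (u β)

/-- `m_α`, defined by the same sum as `n_α`, restricted to those `u` whose support is
contained in the set of vectors of the same slope as `α`. -/
noncomputable def mQty {I : Type*} [Fintype I] (Θ : I → ℤ) (r : (I → ℕ) → ℕ)
    (α : I → ℕ) : ℕ :=
  ∑ᶠ u ∈ {u : (I → ℕ) →₀ ℕ |
      u 0 = 0 ∧ (u.sum fun β n => n • β) = α ∧
      ∀ β ∈ u.support, slopeVec Θ β = slopeVec Θ α},
    ∏ β ∈ u.support, Nat.choose (r β + u β - 1) (u β)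

/-!
Group the vectors in the support of `u` by slope: `u` splits uniquely as a sum of pieces `u_s`
with disjoint supports, one per slope `s`, and since the vectors of slope `s` together with `0`
form the kernel of the linear form `β ↦ ∑ (Θ_i - s) β_i`, each nonzero `∑_β u_s(β)·β` is a vector
`γ_s` of slope `s`. The `γ_s` form a set `D` of distinct slopes summing to `α`, and as the weight
is multiplicative over disjoint supports, the `u` lying over a given `D` contribute `∏_{γ ∈ D} m_γ`.
This is run as an induction on a finite set `Q` of allowed slopes: both sides, restricted to `Q`,
turn a disjoint union of slope sets into a convolution over `ℕ^I`, and they agree for `Q = ∅`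
and for singletons.
-/

open Finsupp

theorem finsum_mem_prod_mul {Y Z R : Type*} [NonUnitalNonAssocSemiring R] {A : Set Y} {B : Set Z}
    (hA : A.Finite) (hB : B.Finite) (f : Y → R) (g : Z → R) :
    ∑ᶠ p ∈ A ×ˢ B, f p.1 * g p.2 = (∑ᶠ y ∈ A, f y) * ∑ᶠ z ∈ B, g z := by
  rw [finsum_mem_eq_finite_toFinset_sum _ hA, finsum_mem_eq_finite_toFinset_sum _ hB,
    finsum_mem_eq_finite_toFinset_sum _ (hA.prod hB), ← Set.Finite.toFinset_prod,
    Finset.sum_mul_sum, Finset.sum_product]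

/-- Graded generating functions multiply along a graded, weight-multiplicative bijection. -/
theorem finsum_mem_fiber_eq_sum_antidiagonal {V X Y Z R : Type*} [AddMonoid V]
    [HasAntidiagonal V] [NonUnitalNonAssocSemiring R] {A : Set Y} {B : Set Z} {C : Set X}
    {σX : X → V} {σY : Y → V} {σZ : Z → V} {wX : X → R} {wY : Y → R} {wZ : Z → R}
    (f : Y × Z → X) (hf : Set.BijOn f (A ×ˢ B) C)
    (hσ : ∀ p ∈ A ×ˢ B, σX (f p) = σY p.1 + σZ p.2)
    (hw : ∀ p ∈ A ×ˢ B, wX (f p) = wY p.1 * wZ p.2)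
    (hA : ∀ γ, {y ∈ A | σY y = γ}.Finite) (hB : ∀ δ, {z ∈ B | σZ z = δ}.Finite) (α : V) :
    ∑ᶠ x ∈ {x ∈ C | σX x = α}, wX x =
      ∑ p ∈ antidiagonal α,
        (∑ᶠ y ∈ {y ∈ A | σY y = p.1}, wY y) * ∑ᶠ z ∈ {z ∈ B | σZ z = p.2}, wZ z := by
  have hfiber : A ×ˢ B ∩ f ⁻¹' {x ∈ C | σX x = α} =
      ⋃ p ∈ (antidiagonal α : Set (V × V)), {y ∈ A | σY y = p.1} ×ˢ {z ∈ B | σZ z = p.2} := by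
    ext ⟨y, z⟩
    simp only [Set.mem_inter_iff, Set.mem_prod, Set.mem_preimage, Set.mem_ofPred_eq,
      Set.mem_iUnion, Finset.mem_coe, HasAntidiagonal.mem_antidiagonal, exists_prop, Prod.exists]
    constructor
    · rintro ⟨⟨hy, hz⟩, -, hα⟩
      exact ⟨σY y, σZ z, by rw [← hσ (y, z) ⟨hy, hz⟩, hα], ⟨hy, rfl⟩, hz, rfl⟩
    · rintro ⟨a, b, hab, ⟨hy, rfl⟩, hz, rfl⟩
      exact ⟨⟨hy, hz⟩, hf.mapsTo ⟨hy, hz⟩, by rw [hσ (y, z) ⟨hy, hz⟩, hab]⟩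
  have hdisj : (antidiagonal α : Set (V × V)).PairwiseDisjoint
      fun p => {y ∈ A | σY y = p.1} ×ˢ {z ∈ B | σZ z = p.2} := by
    intro p _ q _ hpq
    refine Set.disjoint_left.2 fun ⟨y, z⟩ hp hq => hpq ?_
    exact Prod.ext (hp.1.2.symm.trans hq.1.2) (hp.2.2.symm.trans hq.2.2)
  rw [← finsum_mem_eq_of_bijOn f (hf.subset_right (Set.sep_subset C _))
      fun p hp => (hw p hp.1).symm,
    hfiber, finsum_mem_biUnion hdisj (Finset.finite_toSet _) fun p _ => (hA _).prod (hB _),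
    finsum_mem_coe_finset]
  exact Finset.sum_congr rfl fun p _ => finsum_mem_prod_mul (hA _) (hB _) _ _

theorem Finsupp.filter_add_eq_left {α M : Type*} [AddZeroClass M] {p : α → Prop} [DecidablePred p]
    {u v : α →₀ M} (hu : ∀ x ∈ u.support, p x) (hv : ∀ x ∈ v.support, ¬p x) :
    (u + v).filter p = u := by
  rw [filter_add, (filter_eq_self_iff p u).2 fun x hx => hu x (mem_support_iff.2 hx),
    (filter_eq_zero_iff p v).2 fun x hx => by_contra fun h => hv x (mem_support_iff.2 h) hx,
    add_zero]

theorem Finset.filter_union_eq_left {α : Type*} [DecidableEq α] {p : α → Prop} [DecidablePred p]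
    {s t : Finset α} (hs : ∀ x ∈ s, p x) (ht : ∀ x ∈ t, ¬p x) : (s ∪ t).filter p = s := by
  rw [filter_union, filter_true_of_mem hs, filter_false_of_mem ht, union_empty]

theorem Finsupp.ne_zero_of_mem_support {α M : Type*} [Zero α] [Zero M] {u : α →₀ M} (h0 : u 0 = 0)
    {β : α} (hβ : β ∈ u.support) : β ≠ 0 := by
  rintro rfl
  exact mem_support_iff.1 hβ h0

namespace PBW

variable {I : Type} [Fintype I]

open Classical in
noncomputable instance : HasAntidiagonal (I → ℕ) where
  antidiagonal α := (Iic α).image fun γ => (γ, α - γ)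
  mem_antidiagonal {α p} := by
    simp only [Finset.mem_image, Finset.mem_Iic]
    constructor
    · rintro ⟨γ, hγ, rfl⟩
      exact add_tsub_cancel_of_le hγ
    · rintro rfl
      exact ⟨p.1, le_self_add, Prod.ext rfl (add_tsub_cancel_left _ _)⟩

theorem sum_cast_ne_zero {β : I → ℕ} (hβ : β ≠ 0) : ∑ i, (β i : ℚ) ≠ 0 := by
  exact_mod_cast fun h => hβ (funext fun i => Finset.sum_eq_zero_iff.1 h i (mem_univ i))

noncomputable def slopeDefect (Θ : I → ℤ) (s : ℚ) : (I → ℕ) →+ ℚ where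
  toFun β := ∑ i, ((Θ i : ℚ) - s) * β i
  map_zero' := by simp
  map_add' β γ := by simp only [Pi.add_apply, Nat.cast_add, mul_add, sum_add_distrib]

theorem slopeVec_eq_iff (Θ : I → ℤ) {β : I → ℕ} (hβ : β ≠ 0) {s : ℚ} :
    slopeVec Θ β = s ↔ slopeDefect Θ s β = 0 := by
  rw [slopeVec, div_eq_iff (sum_cast_ne_zero hβ), ← sub_eq_zero, Finset.mul_sum,
    ← Finset.sum_sub_distrib]
  simp only [slopeDefect, AddMonoidHom.coe_mk, ZeroHom.coe_mk, sub_mul]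

theorem slopeVec_linearCombination (Θ : I → ℤ) {u : (I → ℕ) →₀ ℕ} (h0 : u 0 = 0) {s : ℚ}
    (hs : ∀ β ∈ u.support, slopeVec Θ β = s) (hne : linearCombination ℕ id u ≠ 0) :
    slopeVec Θ (linearCombination ℕ id u) = s := by
  rw [slopeVec_eq_iff Θ hne, linearCombination_apply, map_finsuppSum]
  refine Finset.sum_eq_zero fun β hβ => ?_
  simp only [id_eq, map_nsmul, (slopeVec_eq_iff Θ (ne_zero_of_mem_support h0 hβ)).1 (hs β hβ),
    smul_zero]

theorem smul_le_linearCombination (u : (I → ℕ) →₀ ℕ) (β : I → ℕ) :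
    u β • β ≤ linearCombination ℕ id u := by
  by_cases hβ : β ∈ u.support
  · rw [linearCombination_apply]
    exact Finset.single_le_sum (f := fun β => u β • id β) (fun _ _ => zero_le) hβ
  · simp [notMem_support_iff.1 hβ]

theorem le_linearCombination {u : (I → ℕ) →₀ ℕ} {β : I → ℕ} (hβ : β ∈ u.support) :
    β ≤ linearCombination ℕ id u :=
  (le_self_nsmul zero_le (mem_support_iff.1 hβ)).trans (smul_le_linearCombination u β)

theorem apply_le_sum_linearCombination {u : (I → ℕ) →₀ ℕ} (h0 : u 0 = 0) (β : I → ℕ) :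
    u β ≤ ∑ i, linearCombination ℕ id u i := by
  by_cases hβ : β ∈ u.support
  · obtain ⟨i, hi⟩ := Function.ne_iff.1 (Finsupp.ne_zero_of_mem_support h0 hβ)
    calc u β ≤ (u β • β) i := Nat.le_mul_of_pos_right _ (Nat.pos_of_ne_zero hi)
      _ ≤ linearCombination ℕ id u i := smul_le_linearCombination u β i
      _ ≤ ∑ i, linearCombination ℕ id u i := Finset.single_le_sum (fun _ _ => zero_le) (mem_univ i)
  · simp [notMem_support_iff.1 hβ]

theorem finite_setOf_linearCombination_eq (α : I → ℕ) :
    {u : (I → ℕ) →₀ ℕ | u 0 = 0 ∧ linearCombination ℕ id u = α}.Finite := by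
  classical
  refine ((Iic α).finsupp fun _ => Iic (∑ i, α i)).finite_toSet.subset ?_
  rintro u ⟨h0, rfl⟩
  simp only [Finset.mem_coe, Finset.mem_finsupp_iff, Finset.mem_Iic]
  exact ⟨fun β hβ => Finset.mem_Iic.2 (le_linearCombination hβ),
    fun β _ => apply_le_sum_linearCombination h0 β⟩

theorem eq_zero_of_linearCombination_eq_zero {u : (I → ℕ) →₀ ℕ} (h0 : u 0 = 0)
    (hu : linearCombination ℕ id u = 0) : u = 0 := by
  ext β
  simpa [hu] using apply_le_sum_linearCombination h0 β

variable (Θ : I → ℤ)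

def finsuppsWithSlopesIn (Q : Set ℚ) : Set ((I → ℕ) →₀ ℕ) :=
  {u | u 0 = 0 ∧ ∀ β ∈ u.support, slopeVec Θ β ∈ Q}

def finsetsWithDistinctSlopesIn (Q : Set ℚ) : Set (Finset (I → ℕ)) :=
  {D | 0 ∉ D ∧ (D : Set (I → ℕ)).Pairwise (fun β γ => slopeVec Θ β ≠ slopeVec Θ γ) ∧
    ∀ γ ∈ D, slopeVec Θ γ ∈ Q}

variable {Θ}

theorem bijOn_add_finsuppsWithSlopesIn {P Q : Set ℚ} (hPQ : Disjoint P Q) :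
    Set.BijOn (fun p => p.1 + p.2)
      (finsuppsWithSlopesIn Θ P ×ˢ finsuppsWithSlopesIn Θ Q) (finsuppsWithSlopesIn Θ (P ∪ Q)) := by
  classical
  have hQ : ∀ {v : (I → ℕ) →₀ ℕ}, v ∈ finsuppsWithSlopesIn Θ Q →
      ∀ β ∈ v.support, slopeVec Θ β ∉ P :=
    fun hv β hβ hP => Set.disjoint_left.1 hPQ hP (hv.2 β hβ)
  refine Set.InvOn.bijOn (f' := fun u => (u.filter (slopeVec Θ · ∈ P),
    u.filter (slopeVec Θ · ∉ P))) ⟨fun ⟨u, v⟩ ⟨hu, hv⟩ => ?_, fun u _ => ?_⟩ ?_ ?_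
  · refine Prod.ext (filter_add_eq_left hu.2 (hQ hv)) ?_
    dsimp only
    rw [add_comm]
    exact filter_add_eq_left (hQ hv) fun β hβ => not_not.2 (hu.2 β hβ)
  · exact filter_add_filter_not u _
  · rintro ⟨u, v⟩ ⟨hu, hv⟩
    refine ⟨by simp [hu.1, hv.1], fun β hβ => ?_⟩
    rcases Finset.mem_union.1 (support_add hβ) with h | h
    exacts [Or.inl (hu.2 β h), Or.inr (hv.2 β h)]
  · rintro u ⟨h0, hu⟩
    simp only [Set.mem_prod, finsuppsWithSlopesIn, Set.mem_ofPred_eq, filter_apply, h0,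
      ite_self, support_filter, Finset.mem_filter, true_and]
    exact ⟨fun β hβ => hβ.2, fun β hβ => (hu β hβ.1).resolve_left hβ.2⟩

theorem bijOn_union_finsetsWithDistinctSlopesIn {P Q : Set ℚ} (hPQ : Disjoint P Q) :
    Set.BijOn (fun p => p.1 ∪ p.2)
      (finsetsWithDistinctSlopesIn Θ P ×ˢ finsetsWithDistinctSlopesIn Θ Q)
      (finsetsWithDistinctSlopesIn Θ (P ∪ Q)) := by
  classical
  have hQ : ∀ {D : Finset (I → ℕ)}, D ∈ finsetsWithDistinctSlopesIn Θ Q →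
      ∀ γ ∈ D, slopeVec Θ γ ∉ P :=
    fun hD γ hγ hP => Set.disjoint_left.1 hPQ hP (hD.2.2 γ hγ)
  refine Set.InvOn.bijOn (f' := fun D => (D.filter (slopeVec Θ · ∈ P),
    D.filter (slopeVec Θ · ∉ P))) ⟨fun ⟨D, E⟩ ⟨hD, hE⟩ => ?_, fun D _ => ?_⟩ ?_ ?_
  · refine Prod.ext (filter_union_eq_left hD.2.2 (hQ hE)) ?_
    dsimp only
    rw [union_comm]
    exact filter_union_eq_left (hQ hE) fun γ hγ => not_not.2 (hD.2.2 γ hγ)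
  · exact filter_union_filter_not_eq _ D
  · rintro ⟨D, E⟩ ⟨hD, hE⟩
    refine ⟨by simp [hD.1, hE.1], ?_, fun γ hγ => ?_⟩
    · have : Std.Symm fun β γ : I → ℕ => slopeVec Θ β ≠ slopeVec Θ γ := ⟨fun _ _ => Ne.symm⟩
      rw [coe_union, Set.pairwise_union_of_symm]
      exact ⟨hD.2.1, hE.2.1, fun β hβ γ hγ _ hβγ => hQ hE γ hγ (hβγ ▸ hD.2.2 β hβ)⟩
    · rcases Finset.mem_union.1 hγ with h | h
      exacts [Or.inl (hD.2.2 γ h), Or.inr (hE.2.2 γ h)]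
  · rintro D ⟨h0, hD, hQD⟩
    have hsub {p : (I → ℕ) → Prop} [DecidablePred p] : D.filter p ⊆ D := filter_subset p D
    refine ⟨⟨fun h => h0 (hsub h), hD.mono (coe_subset.2 hsub), fun γ hγ => (mem_filter.1 hγ).2⟩,
      fun h => h0 (hsub h), hD.mono (coe_subset.2 hsub), fun γ hγ => ?_⟩
    exact (hQD γ (mem_filter.1 hγ).1).resolve_left (mem_filter.1 hγ).2

def weight (r : (I → ℕ) → ℕ) (u : (I → ℕ) →₀ ℕ) : ℕ :=
  u.prod fun β n => (r β + n - 1).choose n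

omit [Fintype I] in
theorem weight_add (r : (I → ℕ) → ℕ) {u v : (I → ℕ) →₀ ℕ} (h : Disjoint u.support v.support) :
    weight r (u + v) = weight r u * weight r v :=
  prod_add_index_of_disjoint h _

variable (Θ)

noncomputable def nQtyIn (r : (I → ℕ) → ℕ) (Q : Set ℚ) (α : I → ℕ) : ℕ :=
  ∑ᶠ u ∈ {u ∈ finsuppsWithSlopesIn Θ Q | linearCombination ℕ id u = α}, weight r u

noncomputable def sumProdMQtyIn (r : (I → ℕ) → ℕ) (Q : Set ℚ) (α : I → ℕ) : ℕ :=
  ∑ᶠ D ∈ {D ∈ finsetsWithDistinctSlopesIn Θ Q | ∑ γ ∈ D, γ = α}, ∏ γ ∈ D, mQty Θ r γ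

theorem finite_fiber_finsuppsWithSlopesIn (Q : Set ℚ) (α : I → ℕ) :
    {u ∈ finsuppsWithSlopesIn Θ Q | linearCombination ℕ id u = α}.Finite :=
  (finite_setOf_linearCombination_eq α).subset fun _ hu => ⟨hu.1.1, hu.2⟩

theorem finite_fiber_finsetsWithDistinctSlopesIn (Q : Set ℚ) (α : I → ℕ) :
    {D ∈ finsetsWithDistinctSlopesIn Θ Q | ∑ γ ∈ D, γ = α}.Finite := by
  classical
  refine (Iic α).powerset.finite_toSet.subset fun D hD => mem_powerset.2 fun γ hγ => ?_
  exact mem_Iic.2 (hD.2 ▸ single_le_sum (f := id) (fun _ _ => zero_le) hγ)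

variable {Θ}

theorem nQtyIn_union (r : (I → ℕ) → ℕ) {P Q : Set ℚ} (hPQ : Disjoint P Q) (α : I → ℕ) :
    nQtyIn Θ r (P ∪ Q) α = ∑ p ∈ antidiagonal α, nQtyIn Θ r P p.1 * nQtyIn Θ r Q p.2 :=
  finsum_mem_fiber_eq_sum_antidiagonal _ (bijOn_add_finsuppsWithSlopesIn hPQ)
    (fun _ _ => map_add _ _ _)
    (fun _ hp => weight_add r <| Finset.disjoint_left.2 fun β hu hv =>
      Set.disjoint_left.1 hPQ (hp.1.2 β hu) (hp.2.2 β hv))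
    (finite_fiber_finsuppsWithSlopesIn Θ P) (finite_fiber_finsuppsWithSlopesIn Θ Q) α

theorem sumProdMQtyIn_union (r : (I → ℕ) → ℕ) {P Q : Set ℚ} (hPQ : Disjoint P Q) (α : I → ℕ) :
    sumProdMQtyIn Θ r (P ∪ Q) α =
      ∑ p ∈ antidiagonal α, sumProdMQtyIn Θ r P p.1 * sumProdMQtyIn Θ r Q p.2 := by
  classical
  have hdisj : ∀ p ∈ finsetsWithDistinctSlopesIn Θ P ×ˢ finsetsWithDistinctSlopesIn Θ Q,
      Disjoint p.1 p.2 := fun _ hp => Finset.disjoint_left.2 fun γ hD hE =>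
    Set.disjoint_left.1 hPQ (hp.1.2.2 γ hD) (hp.2.2.2 γ hE)
  exact finsum_mem_fiber_eq_sum_antidiagonal _ (bijOn_union_finsetsWithDistinctSlopesIn hPQ)
    (fun p hp => sum_union (hdisj p hp)) (fun p hp => prod_union (hdisj p hp))
    (finite_fiber_finsetsWithDistinctSlopesIn Θ P) (finite_fiber_finsetsWithDistinctSlopesIn Θ Q) α

theorem nQtyIn_zero (r : (I → ℕ) → ℕ) (Q : Set ℚ) : nQtyIn Θ r Q 0 = 1 := by
  have : {u ∈ finsuppsWithSlopesIn Θ Q | linearCombination ℕ id u = 0} = {0} := by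
    ext u
    refine ⟨fun hu => eq_zero_of_linearCombination_eq_zero hu.1.1 hu.2, ?_⟩
    rintro rfl
    simp [finsuppsWithSlopesIn]
  rw [nQtyIn, this, finsum_mem_singleton, weight, prod_zero_index]

theorem sumProdMQtyIn_zero (r : (I → ℕ) → ℕ) (Q : Set ℚ) : sumProdMQtyIn Θ r Q 0 = 1 := by
  have : {D ∈ finsetsWithDistinctSlopesIn Θ Q | ∑ γ ∈ D, γ = 0} = {∅} := by
    ext D
    refine ⟨fun hD => ?_, ?_⟩
    · refine eq_empty_of_forall_notMem fun γ hγ => hD.1.1 ?_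
      exact (sum_eq_zero_iff.1 hD.2 γ hγ) ▸ hγ
    · rintro rfl
      simp [finsetsWithDistinctSlopesIn]
  rw [sumProdMQtyIn, this, finsum_mem_singleton, prod_empty]

theorem nQtyIn_empty (r : (I → ℕ) → ℕ) {α : I → ℕ} (hα : α ≠ 0) : nQtyIn Θ r ∅ α = 0 := by
  have : {u ∈ finsuppsWithSlopesIn Θ ∅ | linearCombination ℕ id u = α} = ∅ := by
    refine Set.eq_empty_of_forall_notMem fun u hu => hα ?_
    rw [← hu.2, support_eq_empty.1 (eq_empty_of_forall_notMem hu.1.2), map_zero]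
  rw [nQtyIn, this, finsum_mem_empty]

theorem sumProdMQtyIn_empty (r : (I → ℕ) → ℕ) {α : I → ℕ} (hα : α ≠ 0) :
    sumProdMQtyIn Θ r ∅ α = 0 := by
  have : {D ∈ finsetsWithDistinctSlopesIn Θ ∅ | ∑ γ ∈ D, γ = α} = ∅ := by
    refine Set.eq_empty_of_forall_notMem fun D hD => hα ?_
    rw [← hD.2, eq_empty_of_forall_notMem hD.1.2.2, sum_empty]
  rw [sumProdMQtyIn, this, finsum_mem_empty]

theorem nQtyIn_singleton (r : (I → ℕ) → ℕ) (s : ℚ) {γ : I → ℕ} (hγ : γ ≠ 0) :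
    nQtyIn Θ r {s} γ = if slopeVec Θ γ = s then mQty Θ r γ else 0 := by
  split_ifs with hs
  · subst hs
    refine finsum_mem_congr (Set.ext fun u => ?_) fun _ _ => rfl
    simp only [finsuppsWithSlopesIn, Set.mem_singleton_iff, linearCombination_apply, id_eq,
      Set.mem_ofPred_eq]
    tauto
  · have : {u ∈ finsuppsWithSlopesIn Θ {s} | linearCombination ℕ id u = γ} = ∅ := by
      refine Set.eq_empty_of_forall_notMem fun u ⟨⟨h0, hu⟩, hγu⟩ => hs ?_
      subst hγu
      exact slopeVec_linearCombination Θ h0 hu hγ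
    rw [nQtyIn, this, finsum_mem_empty]

theorem sumProdMQtyIn_singleton (r : (I → ℕ) → ℕ) (s : ℚ) {γ : I → ℕ} (hγ : γ ≠ 0) :
    sumProdMQtyIn Θ r {s} γ = if slopeVec Θ γ = s then mQty Θ r γ else 0 := by
  have : {D ∈ finsetsWithDistinctSlopesIn Θ {s} | ∑ δ ∈ D, δ = γ} =
      {D | D = {γ} ∧ slopeVec Θ γ = s} := by
    ext D
    constructor
    · rintro ⟨⟨-, hD, hs⟩, hsum⟩
      obtain ⟨δ, hδ⟩ := nonempty_of_sum_ne_zero (hsum ▸ hγ)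
      have hDδ : D = {δ} := eq_singleton_iff_unique_mem.2 ⟨hδ, fun β hβ => by_contra fun hβδ =>
        hD hβ hδ hβδ ((hs β hβ).trans (hs δ hδ).symm)⟩
      rw [hDδ, sum_singleton] at hsum
      exact ⟨hsum ▸ hDδ, hsum ▸ hs δ hδ⟩
    · rintro ⟨rfl, hs⟩
      simp [finsetsWithDistinctSlopesIn, hs, Ne.symm hγ]
  rw [sumProdMQtyIn, this]
  split_ifs with hs <;> simp [hs]

variable (Θ) in
theorem nQtyIn_eq_sumProdMQtyIn (r : (I → ℕ) → ℕ) {Q : Set ℚ} (hQ : Q.Finite) :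
    nQtyIn Θ r Q = sumProdMQtyIn Θ r Q := by
  induction Q, hQ using Set.Finite.induction_on with
  | empty =>
    funext α
    by_cases hα : α = 0
    · rw [hα, nQtyIn_zero, sumProdMQtyIn_zero]
    · rw [nQtyIn_empty r hα, sumProdMQtyIn_empty r hα]
  | @insert s Q hs _ ih =>
    have hsingle : nQtyIn Θ r {s} = sumProdMQtyIn Θ r {s} := funext fun γ => by
      by_cases hγ : γ = 0
      · rw [hγ, nQtyIn_zero, sumProdMQtyIn_zero]
      · rw [nQtyIn_singleton r s hγ, sumProdMQtyIn_singleton r s hγ]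
    funext α
    rw [Set.insert_eq, nQtyIn_union r (Set.disjoint_singleton_left.2 hs),
      sumProdMQtyIn_union r (Set.disjoint_singleton_left.2 hs), hsingle, ih]

theorem nQty_eq_nQtyIn (r : (I → ℕ) → ℕ) {Q : Set ℚ} {α : I → ℕ}
    (hQ : ∀ β ≤ α, slopeVec Θ β ∈ Q) : nQty r α = nQtyIn Θ r Q α := by
  refine finsum_mem_congr (Set.ext fun u => ?_) fun _ _ => rfl
  simp only [finsuppsWithSlopesIn, linearCombination_apply, id_eq, Set.mem_ofPred_eq]
  refine ⟨fun ⟨h0, hu⟩ => ⟨⟨h0, fun β hβ => hQ β ?_⟩, hu⟩, fun ⟨⟨h0, _⟩, hu⟩ => ⟨h0, hu⟩⟩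
  simpa [← hu, linearCombination_apply] using le_linearCombination hβ

theorem sumProdMQtyIn_eq (r : (I → ℕ) → ℕ) {Q : Set ℚ} {α : I → ℕ}
    (hQ : ∀ β ≤ α, slopeVec Θ β ∈ Q) :
    sumProdMQtyIn Θ r Q α =
      ∑ᶠ D ∈ {D : Finset (I → ℕ) | (0 : I → ℕ) ∉ D ∧
          (D : Set (I → ℕ)).Pairwise (fun β γ => slopeVec Θ β ≠ slopeVec Θ γ) ∧
          ∑ γ ∈ D, γ = α},
        ∏ γ ∈ D, mQty Θ r γ := by
  refine finsum_mem_congr (Set.ext fun D => ?_) fun _ _ => rfl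
  simp only [finsetsWithDistinctSlopesIn, Set.mem_ofPred_eq]
  refine ⟨fun ⟨⟨h0, hD, _⟩, hα⟩ => ⟨h0, hD, hα⟩, fun ⟨h0, hD, hα⟩ => ⟨⟨h0, hD, fun γ hγ => ?_⟩, hα⟩⟩
  exact hQ γ (hα ▸ single_le_sum (f := id) (fun _ _ => zero_le) hγ)

end PBW

theorem nQty_eq_sum_prod_mQty_general
    {I : Type} [Fintype I] (Θ : I → ℤ) (r : (I → ℕ) → ℕ)
    (α : I → ℕ) :
    nQty r α =
      ∑ᶠ D ∈ {D : Finset (I → ℕ) | (0 : I → ℕ) ∉ D ∧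
          (D : Set (I → ℕ)).Pairwise (fun β γ => slopeVec Θ β ≠ slopeVec Θ γ) ∧
          ∑ γ ∈ D, γ = α},
        ∏ γ ∈ D, mQty Θ r γ := by
  classical
  have hQ : ∀ β ≤ α, slopeVec Θ β ∈ slopeVec Θ '' Set.Iic α := fun β hβ => ⟨β, hβ, rfl⟩
  rw [PBW.nQty_eq_nQtyIn r hQ, PBW.nQtyIn_eq_sumProdMQtyIn Θ r ((Set.finite_Iic α).image _),
    PBW.sumProdMQtyIn_eq r hQ]

/-- The PBW identity: for every nonzero `α`,
`n_α = ∑_D ∏_{γ ∈ D} m_γ`, the sum over all finite sets `D` of nonzero vectors with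
pairwise distinct slopes and `∑_{γ ∈ D} γ = α`. -/
theorem nQty_eq_sum_prod_mQty
    {I : Type} [Fintype I] (Θ : I → ℤ) (r : (I → ℕ) → ℕ)
    (α : I → ℕ) (hα : α ≠ 0) :
    nQty r α =
      ∑ᶠ D ∈ {D : Finset (I → ℕ) | (0 : I → ℕ) ∉ D ∧
          (D : Set (I → ℕ)).Pairwise (fun β γ => slopeVec Θ β ≠ slopeVec Θ γ) ∧
          ∑ γ ∈ D, γ = α},
        ∏ γ ∈ D, mQty Θ r γ :=
  nQty_eq_sum_prod_mQty_general Θ r α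
end

section
/- Let ε_1, …, ε_n be complex numbers with |ε_j| = 1 for all j. If the sequence of sums r ↦ Σ_{j=1}^n ε_j^r (r ranging over the natural numbers) converges, then ε_j = 1 for every j. -/
open Filter Finset

/-- Cesàro average of powers of a unit complex number ≠ 1 tends to 0. -/
lemma cesaro_pow_zero {ζ : ℂ} (h1 : ‖ζ‖ = 1) (hne : ζ ≠ 1) :
    Tendsto (fun N : ℕ => (N⁻¹ : ℝ) • ∑ r ∈ range N, ζ ^ r) atTop (nhds 0) := by
  rw [tendsto_zero_iff_norm_tendsto_zero]
  have hb : ∀ N : ℕ, ‖(N⁻¹ : ℝ) • ∑ r ∈ range N, ζ ^ r‖ ≤ (N : ℝ)⁻¹ * (2 / ‖ζ - 1‖) := by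
    intro N
    rw [norm_smul, norm_inv, Real.norm_natCast]
    gcongr
    rw [geom_sum_eq hne]
    rw [norm_div]
    gcongr
    calc ‖ζ ^ N - 1‖ ≤ ‖ζ ^ N‖ + ‖(1 : ℂ)‖ := norm_sub_le _ _
      _ = 2 := by rw [norm_pow, h1]; norm_num
  have h0 : Tendsto (fun N : ℕ => (N : ℝ)⁻¹ * (2 / ‖ζ - 1‖)) atTop (nhds 0) := by
    simpa using (tendsto_inv_atTop_nhds_zero_nat : Tendsto (fun N : ℕ => (N : ℝ)⁻¹) atTop (nhds 0)).mul_const (2 / ‖ζ - 1‖)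
  exact squeeze_zero (fun N => norm_nonneg _) hb h0

/-- If `ε_1, …, ε_n` are complex numbers of modulus `1` such that the sequence
`r ↦ ∑_j ε_j^r` converges, then all `ε_j` equal `1`. -/
theorem eps_eq_one_of_sum_pow_converges
    {n : ℕ} (ε : Fin n → ℂ) (hε : ∀ j, ‖ε j‖ = 1)
    (hconv : ∃ L : ℂ, Filter.Tendsto (fun r : ℕ => ∑ j, ε j ^ r) Filter.atTop (nhds L)) :
    ∀ j, ε j = 1 := by
  obtain ⟨L, hL⟩ := hconv
  intro j
  by_contra hj
  set c : ℂ := starRingEnd ℂ (ε j) with hc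
  have habsc : ‖c‖ = 1 := by rw [hc, Complex.norm_conj]; exact hε j
  have hcj : c * ε j = 1 := by
    rw [hc, mul_comm, Complex.mul_conj, Complex.normSq_eq_norm_sq, hε j]; norm_num
  have hcne : c ≠ 1 := by
    intro h
    apply hj
    have := hcj
    rw [h, one_mul] at this
    exact this
  set S : ℕ → ℂ := fun r => ∑ k, ε k ^ r with hS
  set A : ℕ → ℂ := fun N => (N⁻¹ : ℝ) • ∑ r ∈ range N, c ^ r * S r with hA
  -- Limit 1 : A → 0
  have hA0 : Tendsto A atTop (nhds 0) := by
    have hsplit : ∀ N, A N = ((N⁻¹ : ℝ) • ∑ r ∈ range N, c ^ r) * L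
        + (N⁻¹ : ℝ) • ∑ r ∈ range N, c ^ r * (S r - L) := by
      intro N
      simp only [hA]
      rw [smul_mul_assoc, sum_mul, ← smul_add, ← sum_add_distrib]
      congr 1
      apply Finset.sum_congr rfl
      intro r _
      ring
    have h1 : Tendsto (fun N : ℕ => ((N⁻¹ : ℝ) • ∑ r ∈ range N, c ^ r) * L) atTop (nhds 0) := by
      simpa using (cesaro_pow_zero habsc hcne).mul_const L
    have h2 : Tendsto (fun r : ℕ => c ^ r * (S r - L)) atTop (nhds 0) := by
      rw [tendsto_zero_iff_norm_tendsto_zero]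
      have : ∀ r : ℕ, ‖c ^ r * (S r - L)‖ = ‖S r - L‖ := by
        intro r
        rw [norm_mul, norm_pow, habsc, one_pow, one_mul]
      simp only [this]
      rw [← tendsto_zero_iff_norm_tendsto_zero]
      simpa using hL.sub (tendsto_const_nhds (x := L))
    have h3 := h2.cesaro_smul
    have h4 := h1.add h3
    rw [add_zero] at h4
    exact (tendsto_congr hsplit).mpr h4
  -- Limit 2 : A → number of k with ε k = ε j
  have hA1 : Tendsto A atTop (nhds (∑ k, if ε k = ε j then (1 : ℂ) else 0)) := by
    have hswap : ∀ N, A N = ∑ k, (N⁻¹ : ℝ) • ∑ r ∈ range N, (c * ε k) ^ r := by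
      intro N
      simp only [hA]
      rw [← smul_sum]
      congr 1
      rw [Finset.sum_comm]
      apply Finset.sum_congr rfl
      intro r _
      rw [hS, Finset.mul_sum]
      exact Finset.sum_congr rfl fun k _ => (mul_pow c (ε k) r).symm
    refine (tendsto_congr hswap).mpr ?_
    apply tendsto_finset_sum
    intro k _
    by_cases hk : ε k = ε j
    · simp only [hk, hcj, if_pos]
      have hev : (fun N : ℕ => (N⁻¹ : ℝ) • ∑ r ∈ range N, (1 : ℂ) ^ r)
          =ᶠ[atTop] fun _ => (1 : ℂ) := by
        filter_upwards [Filter.eventually_ge_atTop 1] with N hN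
        have hN0 : (N : ℂ) ≠ 0 := Nat.cast_ne_zero.mpr (by omega)
        simp [Complex.real_smul]
        exact inv_mul_cancel₀ hN0
      exact Tendsto.congr' hev.symm tendsto_const_nhds
    · simp only [if_neg hk]
      apply cesaro_pow_zero
      · rw [norm_mul, habsc, hε k, one_mul]
      · intro h
        apply hk
        have : ε k = c * ε k * ε j := by rw [mul_assoc, mul_comm (ε k), ← mul_assoc, hcj, one_mul]
        rw [this, h, one_mul]
  -- conclude
  have heq := tendsto_nhds_unique hA1 hA0
  rw [Finset.sum_boole] at heq
  have hcard : (Finset.univ.filter fun k => ε k = ε j).card = 0 := by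
    exact_mod_cast heq
  have hjmem : j ∈ Finset.univ.filter fun k => ε k = ε j := by simp
  rw [Finset.card_eq_zero] at hcard
  simp [hcard] at hjmem
end

section
/- Let q > 1 be a real number and d ∈ ℕ. Let b_0, …, b_{2d} be integers with b_i = 0 for every odd i, and for each 0 ≤ i ≤ 2d let β_i ∈ ℕ and let ε_{i,1}, …, ε_{i,β_i} be complex numbers of modulus 1. Suppose that for every integer r ≥ 1: Σ_{i=0}^{2d} (−1)^i b_i q^{ri/2} = Σ_{i=0}^{2d} (−1)^i (Σ_{j=1}^{β_i} ε_{i,j}^r) q^{ri/2}. Then β_i = 0 for every odd i, ε_{i,j} = 1 for all i and j, and b_i = β_i for every even i; in particular every b_i is nonnegative. -/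
open Finset Filter Topology


lemma simul_recurrence {n : ℕ} (ε : Fin n → ℂ) (hε : ∀ j, ‖ε j‖ = 1)
    {δ : ℝ} (hδ : 0 < δ) (N : ℕ) :
    ∃ r : ℕ, N ≤ r ∧ 1 ≤ r ∧ ∀ j, ‖ε j ^ r - 1‖ < δ := by
  set M := max N 1 with hM
  set x : ℕ → (Fin n → ℂ) := fun k j => ε j ^ (k * M) with hx
  have hxmem : ∀ k, x k ∈ Metric.closedBall (0 : Fin n → ℂ) 1 := by
    intro k
    rw [Metric.mem_closedBall, dist_zero_right, pi_norm_le_iff_of_nonneg zero_le_one]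
    intro j
    simp [hx, norm_pow, hε j]
  obtain ⟨a, -, φ, hφ, hconv⟩ :=
    tendsto_subseq_of_bounded Metric.isBounded_closedBall hxmem
  have hcauchy : CauchySeq (x ∘ φ) := hconv.cauchySeq
  rw [Metric.cauchySeq_iff'] at hcauchy
  obtain ⟨K, hK⟩ := hcauchy δ hδ
  have hlt : φ K < φ (K + 1) := hφ (Nat.lt_succ_self K)
  refine ⟨(φ (K + 1) - φ K) * M, ?_, ?_, ?_⟩
  · calc N ≤ M := le_max_left _ _
    _ = 1 * M := (one_mul M).symm
    _ ≤ (φ (K + 1) - φ K) * M := Nat.mul_le_mul_right _ (by omega)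
  · have : 1 ≤ M := le_max_right _ _
    calc 1 ≤ 1 * M := by omega
    _ ≤ (φ (K + 1) - φ K) * M := Nat.mul_le_mul_right _ (by omega)
  · intro j
    have hd := hK (K + 1) (Nat.le_succ K)
    have hcoord : dist (x (φ (K + 1)) j) (x (φ K) j) ≤ dist ((x ∘ φ) (K + 1)) ((x ∘ φ) K) :=
      dist_le_pi_dist _ _ j
    have key : ε j ^ (φ (K + 1) * M) - ε j ^ (φ K * M)
        = ε j ^ (φ K * M) * (ε j ^ ((φ (K + 1) - φ K) * M) - 1) := by
      have hexp : φ K + (φ (K + 1) - φ K) = φ (K + 1) := by omega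
      rw [mul_sub, mul_one, ← pow_add, ← Nat.add_mul, hexp]
    have : ‖ε j ^ (φ (K + 1) * M) - ε j ^ (φ K * M)‖ < δ := by
      have := hcoord.trans_lt hd
      simpa [hx, Complex.dist_eq] using this
    rw [key, norm_mul, norm_pow, hε j, one_pow, one_mul] at this
    exact this


lemma aux_bound (n : ℕ) {δ : ℝ} (hδ : 0 < δ) : (n:ℝ) * (δ / (3 * (n + 1))) ≤ δ / 3 := by
  have hn1 : (0:ℝ) < (n:ℝ) + 1 := by positivity
  rw [← div_div, mul_div_assoc', div_le_iff₀ hn1]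
  nlinarith [hδ.le, (Nat.cast_nonneg n : (0:ℝ) ≤ (n:ℝ))]

lemma power_sum_limit {n : ℕ} (ε : Fin n → ℂ) (hε : ∀ j, ‖ε j‖ = 1)
    {L : ℂ} (h : Tendsto (fun r : ℕ => ∑ j, ε j ^ r) atTop (𝓝 L)) :
    L = n ∧ ∀ j, ε j = 1 := by
  -- key: for any δ > 0, |L - n| ≤ ... and |∑ ε j - L| small
  have key : ∀ δ : ℝ, 0 < δ → ‖L - n‖ ≤ δ ∧ ‖∑ j, ε j - L‖ ≤ δ := by
    intro δ hδ
    have hδ3 : 0 < δ / (3 * (n + 1)) := by positivity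
    rw [Metric.tendsto_atTop] at h
    obtain ⟨R, hR⟩ := h (δ / 3) (by positivity)
    obtain ⟨r, hrR, hr1, hrj⟩ := simul_recurrence ε hε hδ3 R
    have hsum : ‖∑ j, ε j ^ r - n‖ ≤ δ / 3 := by
      have : (∑ j, ε j ^ r) - (n : ℂ) = ∑ j : Fin n, (ε j ^ r - 1) := by
        rw [Finset.sum_sub_distrib]
        simp
      rw [this]
      calc ‖∑ j : Fin n, (ε j ^ r - 1)‖ ≤ ∑ j : Fin n, ‖ε j ^ r - 1‖ :=
            norm_sum_le _ _
      _ ≤ ∑ _j : Fin n, δ / (3 * (n + 1)) :=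
            Finset.sum_le_sum fun j _ => (hrj j).le
      _ = n * (δ / (3 * (n + 1))) := by rw [Finset.sum_const]; simp [mul_comm]
      _ ≤ δ / 3 := aux_bound n hδ
    have hsum2 : ‖∑ j, ε j ^ (r + 1) - ∑ j, ε j‖ ≤ δ / 3 := by
      have : (∑ j, ε j ^ (r + 1)) - ∑ j, ε j = ∑ j : Fin n, ε j * (ε j ^ r - 1) := by
        rw [← Finset.sum_sub_distrib]
        exact Finset.sum_congr rfl fun j _ => by ring
      rw [this]
      calc ‖∑ j : Fin n, ε j * (ε j ^ r - 1)‖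
          ≤ ∑ j : Fin n, ‖ε j * (ε j ^ r - 1)‖ := norm_sum_le _ _
      _ ≤ ∑ _j : Fin n, δ / (3 * (n + 1)) := by
            refine Finset.sum_le_sum fun j _ => ?_
            rw [norm_mul, hε j, one_mul]
            exact (hrj j).le
      _ = n * (δ / (3 * (n + 1))) := by rw [Finset.sum_const]; simp [mul_comm]
      _ ≤ δ / 3 := aux_bound n hδ
    have hLr : ‖∑ j, ε j ^ r - L‖ < δ / 3 := by
      have := hR r hrR
      rwa [Complex.dist_eq] at this
    have hLr1 : ‖∑ j, ε j ^ (r + 1) - L‖ < δ / 3 := by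
      have := hR (r + 1) (by omega)
      rwa [Complex.dist_eq] at this
    constructor
    · calc ‖L - n‖ = ‖(L - ∑ j, ε j ^ r) + (∑ j, ε j ^ r - n)‖ := by
            congr 1; ring
      _ ≤ ‖L - ∑ j, ε j ^ r‖ + ‖∑ j, ε j ^ r - n‖ :=
            norm_add_le _ _
      _ ≤ δ / 3 + δ / 3 := by
            rw [← norm_neg (L - _)]
            simp only [neg_sub]
            exact add_le_add hLr.le hsum
      _ ≤ δ := by linarith
    · calc ‖∑ j, ε j - L‖
          = ‖(∑ j, ε j - ∑ j, ε j ^ (r+1)) + (∑ j, ε j ^ (r+1) - L)‖ := by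
            congr 1; ring
      _ ≤ _ := norm_add_le _ _
      _ ≤ δ / 3 + δ / 3 := by
            rw [← norm_neg (_ - ∑ j, ε j ^ (r+1))]
            simp only [neg_sub]
            exact add_le_add hsum2 hLr1.le
      _ ≤ δ := by linarith
  have hLn : L = n := by
    by_contra hne
    have hpos : 0 < ‖L - n‖ := by
      rw [norm_pos_iff]
      intro h0
      exact hne (sub_eq_zero.mp h0)
    have := (key (‖L - n‖ / 2) (by linarith)).1
    linarith
  have hsum1 : (∑ j, ε j) = n := by
    by_contra hne
    have hpos : 0 < ‖∑ j, ε j - L‖ := by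
      rw [norm_pos_iff, sub_ne_zero]
      rw [hLn]; exact hne
    have := (key (‖∑ j, ε j - L‖ / 2) (by linarith)).2
    linarith
  refine ⟨hLn, ?_⟩
  -- equality case of triangle inequality: ∑ Re (ε j) = n with each Re ≤ 1
  have hre : ∑ j, (ε j).re = n := by
    have := congrArg Complex.re hsum1
    simpa [Complex.re_sum] using this
  have hre_le : ∀ j, (ε j).re ≤ 1 := by
    intro j
    calc (ε j).re ≤ ‖ε j‖ := Complex.re_le_norm _
    _ = 1 := hε j
  have hre_eq : ∀ j ∈ Finset.univ, (ε j).re = 1 := by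
    have hcard : ∑ _j : Fin n, (1:ℝ) = n := by simp
    intro j hj
    by_contra hne
    have hlt : (ε j).re < 1 := lt_of_le_of_ne (hre_le j) hne
    have : ∑ j, (ε j).re < ∑ _j : Fin n, (1:ℝ) :=
      Finset.sum_lt_sum (fun i _ => hre_le i) ⟨j, hj, hlt⟩
    rw [hre, hcard] at this
    exact lt_irrefl _ this
  intro j
  have h1 : (ε j).re = 1 := hre_eq j (Finset.mem_univ j)
  have h2 : (ε j).re ^ 2 + (ε j).im ^ 2 = 1 := by
    have hsq : Complex.normSq (ε j) = 1 := by
      have := hε j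
      have h := congrArg (fun x => x ^ 2) this
      simpa [Complex.sq_norm] using h
    simpa [Complex.normSq_apply, sq] using hsq
  have him : (ε j).im = 0 := by nlinarith
  exact Complex.ext (by simp [h1]) (by simp [him])


/-- Lemma A.1 of Crawley-Boevey/Van den Bergh: if integers `b_i` (`0 ≤ i ≤ 2d`), vanishing
for odd `i`, and complex numbers `ε_{i,j}` of modulus one satisfy
`∑_i (−1)^i b_i q^{ri/2} = ∑_i (−1)^i (∑_j ε_{i,j}^r) q^{ri/2}` for all `r ≥ 1`
(with `q > 1` and `q^{ri/2} = (√q)^{ri}`), then `β_i = 0` for odd `i`, all `ε_{i,j} = 1`,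
and `b_i = β_i` for even `i`; in particular every `b_i` is nonnegative. -/
theorem purity_counting_lemma
    {q : ℝ} (hq : 1 < q) (d : ℕ)
    (b : ℕ → ℤ) (hbodd : ∀ i ≤ 2 * d, Odd i → b i = 0)
    (β : ℕ → ℕ) (ε : ∀ i : ℕ, Fin (β i) → ℂ)
    (hε : ∀ i ≤ 2 * d, ∀ j, ‖ε i j‖ = 1)
    (heq : ∀ r : ℕ, 1 ≤ r →
      ∑ i ∈ range (2 * d + 1), (-1 : ℂ) ^ i * (b i : ℂ) * ((Real.sqrt q : ℂ)) ^ (r * i)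
        = ∑ i ∈ range (2 * d + 1),
            (-1 : ℂ) ^ i * (∑ j, ε i j ^ r) * ((Real.sqrt q : ℂ)) ^ (r * i)) :
    (∀ i ≤ 2 * d, Odd i → β i = 0) ∧
    (∀ i ≤ 2 * d, ∀ j, ε i j = 1) ∧
    (∀ i ≤ 2 * d, Even i → b i = (β i : ℤ)) ∧
    (∀ i ≤ 2 * d, 0 ≤ b i) := by
  set s : ℝ := Real.sqrt q with hs_def
  have hs : 1 < s := by
    have : Real.sqrt 1 < Real.sqrt q := Real.sqrt_lt_sqrt zero_le_one hq
    simpa using this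
  have hs0 : 0 < s := lt_trans one_pos hs
  have hzero : ∀ r : ℕ, 1 ≤ r →
      ∑ i ∈ range (2 * d + 1),
        (-1 : ℂ) ^ i * ((b i : ℂ) - ∑ j, ε i j ^ r) * ((s : ℂ)) ^ (r * i) = 0 := by
    intro r hr
    have hsplit : ∑ i ∈ range (2 * d + 1),
        (-1 : ℂ) ^ i * ((b i : ℂ) - ∑ j, ε i j ^ r) * ((s : ℂ)) ^ (r * i)
        = (∑ i ∈ range (2 * d + 1), (-1 : ℂ) ^ i * (b i : ℂ) * ((s : ℂ)) ^ (r * i))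
          - ∑ i ∈ range (2 * d + 1), (-1 : ℂ) ^ i * (∑ j, ε i j ^ r) * ((s : ℂ)) ^ (r * i) := by
      rw [← Finset.sum_sub_distrib]
      exact Finset.sum_congr rfl fun i _ => by ring
    rw [hsplit, heq r hr, sub_self]
  -- main downward induction
  have main : ∀ t : ℕ, ∀ k, k ≤ 2 * d → 2 * d - k < t →
      ((∀ j, ε k j = 1) ∧ b k = (β k : ℤ)) := by
    intro t
    induction t using Nat.strong_induction_on with
    | _ t IH =>
    intro k hk ht
    have hhigh : ∀ i, k < i → i ≤ 2 * d → ((∀ j, ε i j = 1) ∧ b i = (β i : ℤ)) := by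
      intro i hki hi2
      exact IH (2 * d - i + 1) (by omega) i hi2 (by omega)
    -- the term at i > k vanishes
    have hvanish : ∀ r : ℕ, 1 ≤ r → ∀ i, k < i → i ≤ 2 * d →
        (-1 : ℂ) ^ i * ((b i : ℂ) - ∑ j, ε i j ^ r) * ((s : ℂ)) ^ (r * i) = 0 := by
      intro r hr i hki hi2
      obtain ⟨hε1, hbβ⟩ := hhigh i hki hi2
      have : (∑ j, ε i j ^ r) = (β i : ℂ) := by
        rw [Finset.sum_congr rfl fun j _ => by rw [hε1 j, one_pow]]
        simp
      rw [this, hbβ]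
      push_cast
      ring
    set C : ℝ := ∑ i ∈ range k, (|(b i : ℝ)| + (β i : ℝ)) with hC_def
    have hC0 : 0 ≤ C := Finset.sum_nonneg fun i _ => by positivity
    have hbound : ∀ r : ℕ, 1 ≤ r →
        ‖(b k : ℂ) - ∑ j, ε k j ^ r‖ * s ^ r ≤ C := by
      intro r hr
      set f : ℕ → ℂ := fun i => (-1 : ℂ) ^ i * ((b i : ℂ) - ∑ j, ε i j ^ r) * ((s : ℂ)) ^ (r * i)
        with hf_def
      have h1 : ∑ i ∈ range (k + 1), f i + ∑ i ∈ Ico (k + 1) (2 * d + 1), f i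
          = ∑ i ∈ range (2 * d + 1), f i := Finset.sum_range_add_sum_Ico f (by omega)
      have h2 : ∑ i ∈ Ico (k + 1) (2 * d + 1), f i = 0 := by
        apply Finset.sum_eq_zero
        intro i hi
        rw [Finset.mem_Ico] at hi
        exact hvanish r hr i (by omega) (by omega)
      have h3 : ∑ i ∈ range k, f i + f k = 0 := by
        have := hzero r hr
        rw [← h1, h2, add_zero, Finset.sum_range_succ] at this
        exact this
      have h4 : ‖f k‖ = ‖∑ i ∈ range k, f i‖ := by
        have : f k = -(∑ i ∈ range k, f i) := by linear_combination h3
        rw [this, norm_neg]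
      have h5 : ‖f k‖
          = ‖(b k : ℂ) - ∑ j, ε k j ^ r‖ * s ^ (r * k) := by
        rw [hf_def]
        simp only [norm_mul, norm_pow, norm_neg, norm_one, one_pow, one_mul]
        rw [Complex.norm_real, Real.norm_eq_abs, abs_of_pos hs0]
      have h6 : ‖∑ i ∈ range k, f i‖
          ≤ ∑ i ∈ range k, (|(b i : ℝ)| + (β i : ℝ)) * s ^ (r * i) := by
        refine (norm_sum_le _ _).trans (Finset.sum_le_sum fun i hi => ?_)
        rw [Finset.mem_range] at hi
        rw [hf_def]
        simp only [norm_mul, norm_pow, norm_neg, norm_one, one_pow, one_mul]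
        rw [Complex.norm_real, Real.norm_eq_abs, abs_of_pos hs0]
        refine mul_le_mul_of_nonneg_right ?_ (by positivity)
        calc ‖(b i : ℂ) - ∑ j, ε i j ^ r‖
            = ‖(b i : ℂ) + -(∑ j, ε i j ^ r)‖ := by rw [sub_eq_add_neg]
        _ ≤ ‖(b i : ℂ)‖ + ‖-(∑ j, ε i j ^ r)‖ :=
              norm_add_le _ _
        _ = ‖(b i : ℂ)‖ + ‖∑ j, ε i j ^ r‖ := by
              rw [norm_neg]
        _ ≤ |(b i : ℝ)| + (β i : ℝ) := by
              refine add_le_add (le_of_eq ?_) ?_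
              · rw [Complex.norm_intCast]
              · calc ‖∑ j, ε i j ^ r‖ ≤ ∑ j, ‖ε i j ^ r‖ :=
                      norm_sum_le _ _
                _ = (β i : ℝ) := by
                      rw [Finset.sum_congr rfl fun j _ => by
                        rw [norm_pow, hε i (by omega) j, one_pow]]
                      simp
      -- combine: |X| * s^(r*k) * s^r ≤ C * s^(r*k)
      have h7 : (∑ i ∈ range k, (|(b i : ℝ)| + (β i : ℝ)) * s ^ (r * i)) * s ^ r
          ≤ C * s ^ (r * k) := by
        rw [Finset.sum_mul, hC_def, Finset.sum_mul]
        refine Finset.sum_le_sum fun i hi => ?_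
        rw [Finset.mem_range] at hi
        rw [mul_assoc, ← pow_add]
        refine mul_le_mul_of_nonneg_left ?_ (by positivity)
        exact pow_le_pow_right₀ hs.le (by nlinarith)
      have h8 : ‖(b k : ℂ) - ∑ j, ε k j ^ r‖ * s ^ r * s ^ (r * k)
          ≤ C * s ^ (r * k) := by
        calc ‖(b k : ℂ) - ∑ j, ε k j ^ r‖ * s ^ r * s ^ (r * k)
            = (‖(b k : ℂ) - ∑ j, ε k j ^ r‖ * s ^ (r * k)) * s ^ r := by ring
        _ ≤ (∑ i ∈ range k, (|(b i : ℝ)| + (β i : ℝ)) * s ^ (r * i)) * s ^ r := by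
              refine mul_le_mul_of_nonneg_right ?_ (by positivity)
              rw [← h5, h4]
              exact h6
        _ ≤ C * s ^ (r * k) := h7
      exact le_of_mul_le_mul_right h8 (by positivity)
    -- convergence
    have htend : Tendsto (fun r : ℕ => ∑ j, ε k j ^ r) atTop (𝓝 ((b k : ℂ))) := by
      rw [tendsto_iff_norm_sub_tendsto_zero]
      have hg : Tendsto (fun r : ℕ => C * s⁻¹ ^ r) atTop (𝓝 0) := by
        have := tendsto_pow_atTop_nhds_zero_of_lt_one (by positivity : (0:ℝ) ≤ s⁻¹)
          (inv_lt_one_of_one_lt₀ hs)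
        simpa using this.const_mul C
      refine squeeze_zero' ?_ ?_ hg
      · exact Eventually.of_forall fun r => norm_nonneg _
      · filter_upwards [eventually_ge_atTop 1] with r hr
        have hb := hbound r hr
        have hsr : (0:ℝ) < s ^ r := by positivity
        have : ‖(b k : ℂ) - ∑ j, ε k j ^ r‖ ≤ C * s⁻¹ ^ r := by
          rw [inv_pow, ← div_eq_mul_inv, le_div_iff₀ hsr]
          exact hb
        calc ‖(∑ j, ε k j ^ r) - (b k : ℂ)‖
            = ‖(b k : ℂ) - ∑ j, ε k j ^ r‖ := by
              rw [← norm_neg, neg_sub]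
        _ ≤ C * s⁻¹ ^ r := this
    obtain ⟨hL, hε1⟩ := power_sum_limit (ε k) (hε k hk) htend
    refine ⟨hε1, ?_⟩
    exact_mod_cast hL
  have main' : ∀ i ≤ 2 * d, (∀ j, ε i j = 1) ∧ b i = (β i : ℤ) := fun i hi =>
    main (2 * d - i + 1) i hi (by omega)
  refine ⟨?_, ?_, ?_, ?_⟩
  · intro i hi hodd
    have h1 := (main' i hi).2
    have h2 := hbodd i hi hodd
    omega
  · exact fun i hi => (main' i hi).1
  · exact fun i hi _ => (main' i hi).2
  · intro i hi
    rw [(main' i hi).2]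
    positivity
end

section
/- Let Q be a finite quiver with vertex set I, k an algebraically closed field, α ∈ ℕ^I nonzero, and λ ∈ ℤ^I with λ·α = 0. Let V be a representation of Q over k with dimension vector α which is λ-stable, i.e. λ·dim W > 0 for every subrepresentation W of V with W ≠ 0 and W ≠ V. Then every endomorphism of V (morphism of representations V → V) is a scalar multiple of the identity; in particular End(V) = k. -/
open Matrix

/-- Over an algebraically closed field, every endomorphism of a `λ`-stable representation
is a scalar multiple of the identity; in particular `End(V) = k`. -/
theorem endomorphism_of_stable_is_scalar
    {I A : Type} [Fintype I] (t h : A → I)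
    (k : Type) [Field k] [IsAlgClosed k]
    (α : I → ℕ) (hα : α ≠ 0)
    (lam : I → ℤ) (hlam : ∑ i, lam i * (α i : ℤ) = 0)
    (x : ∀ a : A, Matrix (Fin (α (h a))) (Fin (α (t a))) k)
    (hstable : ∀ W : ∀ i : I, Submodule k (Fin (α i) → k), IsSubrep t h x W →
      W ≠ (fun _ => ⊥) → W ≠ (fun _ => ⊤) →
      0 < ∑ i, lam i * (Module.finrank k (W i) : ℤ))
    (φ : ∀ i : I, Matrix (Fin (α i)) (Fin (α i)) k)
    (hφ : ∀ a : A, φ (h a) * x a = x a * φ (t a)) :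
    ∃ c : k, ∀ i, φ i = c • (1 : Matrix (Fin (α i)) (Fin (α i)) k) := by
  obtain ⟨i₀, hi₀⟩ := Function.ne_iff.mp hα
  have hpos : 0 < α i₀ := Nat.pos_of_ne_zero hi₀
  haveI : Nontrivial (Fin (α i₀) → k) := by
    refine ⟨0, fun _ => 1, fun hcon => ?_⟩
    have := congrFun hcon ⟨0, hpos⟩
    simp at this
  obtain ⟨c, hc⟩ := Module.End.exists_eigenvalue ((φ i₀).mulVecLin)
  refine ⟨c, ?_⟩
  set M : ∀ i, Matrix (Fin (α i)) (Fin (α i)) k := fun i => φ i - c • 1 with hMdef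
  set W : ∀ i, Submodule k (Fin (α i) → k) :=
    fun i => LinearMap.ker (M i).mulVecLin with hWdef
  set U : ∀ i, Submodule k (Fin (α i) → k) :=
    fun i => LinearMap.range (M i).mulVecLin with hUdef
  have hcomm : ∀ a : A, M (h a) * x a = x a * M (t a) := by
    intro a
    simp only [hMdef, Matrix.sub_mul, Matrix.mul_sub, hφ a, Matrix.smul_mul,
      Matrix.mul_smul, Matrix.one_mul, Matrix.mul_one]
  have key : ∀ (a : A) (v : Fin (α (t a)) → k),
      (M (h a)).mulVec ((x a).mulVec v) = (x a).mulVec ((M (t a)).mulVec v) := by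
    intro a v
    rw [Matrix.mulVec_mulVec, Matrix.mulVec_mulVec, hcomm a]
  -- W is a subrepresentation
  have hWsub : IsSubrep t h x W := by
    intro a v hv
    simp only [hWdef, LinearMap.mem_ker, Matrix.mulVecLin_apply] at hv ⊢
    rw [key a v, hv, Matrix.mulVec_zero]
  -- U is a subrepresentation
  have hUsub : IsSubrep t h x U := by
    intro a v hv
    simp only [hUdef, LinearMap.mem_range, Matrix.mulVecLin_apply] at hv ⊢
    obtain ⟨w, hw⟩ := hv
    exact ⟨(x a).mulVec w, by rw [key a w, hw]⟩
  -- W i₀ ≠ ⊥ from the eigenvector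
  have hWi₀ : W i₀ ≠ ⊥ := by
    obtain ⟨v, hv, hv0⟩ := hc.exists_hasEigenvector
    intro hbot
    apply hv0
    have hvmem : v ∈ W i₀ := by
      simp only [hWdef, LinearMap.mem_ker, Matrix.mulVecLin_apply, hMdef,
        Matrix.sub_mulVec, Matrix.smul_mulVec, Matrix.one_mulVec]
      have hvs : (φ i₀).mulVecLin v = c • v := Module.End.mem_eigenspace_iff.mp hv
      simp only [Matrix.mulVecLin_apply] at hvs
      rw [hvs, sub_self]
    rw [hbot] at hvmem
    simpa using hvmem
  -- main claim: W = ⊤ everywhere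
  have hWtop : ∀ i, W i = ⊤ := by
    by_contra hcon
    push_neg at hcon
    obtain ⟨j, hj⟩ := hcon
    -- W is a nonzero subrep; if proper, get positive sum
    have hWnebot : W ≠ (fun _ => ⊥) := fun hb => hWi₀ (congrFun hb i₀)
    have hWnetop : W ≠ (fun _ => ⊤) := fun ht => hj (congrFun ht j)
    have hSW := hstable W hWsub hWnebot hWnetop
    -- U is nonzero (at j) and proper (at i₀)
    have hUnebot : U ≠ (fun _ => ⊥) := by
      intro hb
      apply hj
      have : U j = ⊥ := congrFun hb j
      rw [hUdef] at this
      simp only [LinearMap.range_eq_bot] at this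
      rw [hWdef]
      simp only [LinearMap.ker_eq_top]
      exact this
    have hUnetop : U ≠ (fun _ => ⊤) := by
      intro ht
      apply hWi₀
      have hU : U i₀ = ⊤ := congrFun ht i₀
      have hrn := LinearMap.finrank_range_add_finrank_ker (M i₀).mulVecLin
      rw [show LinearMap.range (M i₀).mulVecLin = U i₀ from rfl, hU] at hrn
      simp only [finrank_top, Module.finrank_fin_fun] at hrn
      have hz : Module.finrank k ↥(LinearMap.ker (M i₀).mulVecLin) = 0 := by omega
      rw [hWdef]
      exact Submodule.finrank_eq_zero.mp hz
    have hSU := hstable U hUsub hUnebot hUnetop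
    -- rank-nullity: sum of the two sums is λ·α = 0
    have hsum : ∀ i, (Module.finrank k (U i) : ℤ) + (Module.finrank k (W i) : ℤ)
        = (α i : ℤ) := by
      intro i
      have hrn := LinearMap.finrank_range_add_finrank_ker (M i).mulVecLin
      simp only [Module.finrank_fin_fun] at hrn
      exact_mod_cast hrn
    have : (0 : ℤ) < ∑ i, lam i * (α i : ℤ) := by
      calc (0 : ℤ) < (∑ i, lam i * (Module.finrank k (U i) : ℤ))
            + ∑ i, lam i * (Module.finrank k (W i) : ℤ) := by positivity
        _ = ∑ i, lam i * (α i : ℤ) := by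
            rw [← Finset.sum_add_distrib]
            congr 1
            ext i
            rw [← mul_add, hsum i]
    omega
  -- conclude φ i = c • 1
  intro i
  have hM0 : M i = 0 := by
    ext r s
    have hm : (Pi.single s 1 : Fin (α i) → k) ∈ W i := by rw [hWtop i]; trivial
    rw [hWdef] at hm
    simp only [LinearMap.mem_ker, Matrix.mulVecLin_apply] at hm
    have := congrFun hm r
    rw [Matrix.mulVec_single] at this
    simpa using this
  have h1 : φ i - c • 1 = 0 := hM0
  rw [sub_eq_zero] at h1
  exact h1
end
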